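/- arXiv:1307.0900 — 10 statements merged into one kernel-verified Lean document; each statement's English description precedes it below -/
import Mathlib

section
/- Let L be a finite lower semimodular lattice, X a maximal CD-independent subset of L, and C a maximal chain of L. Then C ∪ Atoms(L) is a maximal CD-independent subset of L. -/
open scoped Classical

/-- A subset `X` of a lattice with `⊥` is CD-independent if any two
incomparable members meet to `⊥`. -/
def CDIndep {L : Type*} [Lattice L] [OrderBot L] (X : Set L) : Prop :=
  ∀ x ∈ X, ∀ y ∈ X, ¬ x ≤ y → ¬ y ≤ x → x ⊓ y = ⊥

/-- `X` is a maximal CD-independent subset of `S` (within the ambient lattice). -/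
def MaxCDIndepIn {L : Type*} [Lattice L] [OrderBot L] (S X : Set L) : Prop :=
  X ⊆ S ∧ CDIndep X ∧ ∀ Y ⊆ S, CDIndep Y → X ⊆ Y → Y = X

/-- `X` is a maximal CD-independent subset of the whole lattice. -/
def MaxCDIndep {L : Type*} [Lattice L] [OrderBot L] (X : Set L) : Prop :=
  MaxCDIndepIn Set.univ X

/-- The length of the subposet `S`: the size of a longest chain contained in `S`, minus 1. -/
noncomputable def chainLen {L : Type*} [Lattice L] [Fintype L] (S : Set L) : ℕ :=
  ((Finset.univ.powerset.filter
      fun C : Finset L => ↑C ⊆ S ∧ IsChain (· ≤ ·) (C : Set L)).sup Finset.card) - 1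

/-- The length of the finite lattice `L`. -/
noncomputable def latLen (L : Type*) [Lattice L] [Fintype L] : ℕ :=
  chainLen (Set.univ : Set L)

/-- `u_*`: the meet of all lower covers of `u`. -/
noncomputable def lowstar {L : Type*} [Lattice L] [Fintype L] [BoundedOrder L] (u : L) : L :=
  (Finset.univ.filter fun v => v ⋖ u).inf id

/-- `L` is meet-distributive if every interval `[u_*, u]` (for `u ≠ ⊥`) is distributive. -/
def MeetDistrib (L : Type*) [Lattice L] [Fintype L] [BoundedOrder L] : Prop :=
  ∀ u : L, u ≠ ⊥ → ∀ x ∈ Set.Icc (lowstar u) u, ∀ y ∈ Set.Icc (lowstar u) u,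
    ∀ z ∈ Set.Icc (lowstar u) u, x ⊓ (y ⊔ z) = (x ⊓ y) ⊔ (x ⊓ z)

/-- Lower semimodularity: `a ⋖ a ⊔ b` implies `a ⊓ b ⋖ b`. -/
def LowerSemimodular (L : Type*) [Lattice L] : Prop :=
  ∀ a b : L, a ⋖ a ⊔ b → a ⊓ b ⋖ b

/-- The number of atoms of `L`. -/
noncomputable def atomsCard (L : Type*) [Lattice L] [OrderBot L] : ℕ :=
  {a : L | IsAtom a}.ncard

/-- `b` is the pseudocomplement of `a`: the largest element meeting `a` to `⊥`. -/
def PseudoCompl {L : Type*} [Lattice L] [OrderBot L] (a b : L) : Prop :=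
  a ⊓ b = ⊥ ∧ ∀ x, a ⊓ x = ⊥ → x ≤ b

/-- `(a, b)` is a pseudocomplemented pair: each is the pseudocomplement of the other. -/
def PseudoPair {L : Type*} [Lattice L] [OrderBot L] (a b : L) : Prop :=
  PseudoCompl a b ∧ PseudoCompl b a

/-- An element is meet-irreducible if it has exactly one cover. -/
def MeetIrred {L : Type*} [Lattice L] (a : L) : Prop :=
  ∃! b, a ⋖ b

/-- `L` is dually slim: no three-element antichain of meet-irreducible elements. -/
def DuallySlim (L : Type*) [Lattice L] : Prop :=
  ¬ ∃ x y z : L, MeetIrred x ∧ MeetIrred y ∧ MeetIrred z ∧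
    ¬ x ≤ y ∧ ¬ y ≤ x ∧ ¬ x ≤ z ∧ ¬ z ≤ x ∧ ¬ y ≤ z ∧ ¬ z ≤ y

/-!
Atoms meet every element they are not below in `⊥`, so a chain together with the atoms is
CD-independent. For maximality, let `y ∉ C` lie in a CD-independent set containing `C` and the
atoms. Take the least `d ∈ C` above `y` and its lower cover `e` in `C`; then `y` and `e` are
incomparable, so `e ⊓ y = ⊥` and `e ⊔ y = d`. Lower semimodularity applied to `e ⋖ e ⊔ y`
gives `⊥ ⋖ y`, i.e. `y` is an atom.
-/

theorem IsAtom.inf_eq_bot_of_not_le {L : Type*} [Lattice L] [OrderBot L] {a x : L}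
    (ha : IsAtom a) (hax : ¬ a ≤ x) : a ⊓ x = ⊥ :=
  disjoint_iff.mp (ha.not_le_iff_disjoint.mp hax)

theorem IsChain.cdIndep_union_atoms {L : Type*} [Lattice L] [OrderBot L] {C : Set L}
    (hC : IsChain (· ≤ ·) C) : CDIndep (C ∪ {a : L | IsAtom a}) := by
  rintro x (hxC | hx) y hy hxy hyx
  · rcases hy with hyC | hy
    · exact absurd ((hC.total hxC hyC).resolve_left hxy) hyx
    · exact inf_comm x y ▸ hy.inf_eq_bot_of_not_le hyx
  · exact hx.inf_eq_bot_of_not_le hxy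

section MaxChain

variable {α : Type*} [PartialOrder α] {C : Set α}

theorem IsMaxChain.mem_of_forall_le_or_le (hC : IsMaxChain (· ≤ ·) C) {z : α}
    (hz : ∀ c ∈ C, z ≤ c ∨ c ≤ z) : z ∈ C := by
  rw [hC.2 (hC.1.insert fun c hc _ => hz c hc) (Set.subset_insert z C)]
  exact Set.mem_insert z C

theorem IsMaxChain.covBy_of_forall_lt_le (hC : IsMaxChain (· ≤ ·) C) {e d : α}
    (hdC : d ∈ C) (hed : e < d) (hmax : ∀ c ∈ C, c < d → c ≤ e) : e ⋖ d := by
  refine ⟨hed, fun z hez hzd => ?_⟩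
  have hzC : z ∈ C := hC.mem_of_forall_le_or_le fun c hc => by
    rcases hC.1.total hc hdC with hcd | hdc
    · rcases hcd.lt_or_eq with hcd | rfl
      · exact Or.inr ((hmax c hc hcd).trans hez.le)
      · exact Or.inl hzd.le
    · exact Or.inl (hzd.le.trans hdc)
  exact (hmax z hzC hzd).not_gt hez

theorem IsMaxChain.exists_covBy_of_notMem [Finite α] [BoundedOrder α]
    (hC : IsMaxChain (· ≤ ·) C) {y : α} (hyC : y ∉ C) :
    ∃ e ∈ C, ∃ d ∈ C, e ⋖ d ∧ y ≤ d ∧ ¬ y ≤ e ∧ ¬ e ≤ y := by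
  obtain ⟨d, ⟨hdC, hyd⟩, hdmin⟩ := Set.Finite.exists_minimalFor id {c ∈ C | y ≤ c}
    (Set.toFinite _) ⟨⊤, hC.top_mem, le_top⟩
  have hyd_lt : y < d := hyd.lt_of_ne fun h => hyC (h ▸ hdC)
  obtain ⟨e, ⟨heC, hed⟩, hemax⟩ := Set.Finite.exists_maximalFor id {c ∈ C | c < d}
    (Set.toFinite _) ⟨⊥, hC.bot_mem, bot_le.trans_lt hyd_lt⟩
  have hcov : e ⋖ d := hC.covBy_of_forall_lt_le hdC hed fun c hc hcd =>
    (hC.1.total hc heC).elim id (hemax ⟨hc, hcd⟩)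
  refine ⟨e, heC, d, hdC, hcov, hyd, fun hye => (hdmin ⟨heC, hye⟩ hed.le).not_gt hed,
    fun hey => ?_⟩
  exact hcov.2 (hey.lt_of_ne fun h => hyC (h ▸ heC)) hyd_lt

end MaxChain

theorem LowerSemimodular.isAtom_of_covBy {L : Type*} [Lattice L] [OrderBot L]
    (hL : LowerSemimodular L) {e d y : L} (hed : e ⋖ d) (hyd : y ≤ d) (hye : ¬ y ≤ e)
    (hdisj : e ⊓ y = ⊥) : IsAtom y := by
  have hsup : e ⊔ y = d := (sup_le hed.le hyd).eq_of_not_lt (hed.2 (left_lt_sup.mpr hye))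
  exact bot_covBy_iff.mp (hdisj ▸ hL e y (hsup ▸ hed))

theorem maxChain_union_atoms_maximal_CDIndep_general {L : Type*} [Lattice L] [Fintype L]
    [BoundedOrder L] (hLSM : LowerSemimodular L)
    (C : Set L) (hC : IsMaxChain (· ≤ ·) C) :
    MaxCDIndep (C ∪ {a : L | IsAtom a}) := by
  refine ⟨Set.subset_univ _, hC.isChain.cdIndep_union_atoms, fun Y _ hY hsub =>
    (Set.Subset.antisymm (fun y hy => ?_) hsub)⟩
  by_cases hyC : y ∈ C
  · exact Or.inl hyC
  obtain ⟨e, heC, d, -, hed, hyd, hye, hey⟩ := hC.exists_covBy_of_notMem hyC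
  exact Or.inr (hLSM.isAtom_of_covBy hed hyd hye (hY e (hsub (Or.inl heC)) y hy hey hye))

theorem maxChain_union_atoms_maximal_CDIndep {L : Type*} [Lattice L] [Fintype L]
    [BoundedOrder L] (hLSM : LowerSemimodular L)
    (X : Set L) (hX : MaxCDIndep X)
    (C : Set L) (hC : IsMaxChain (· ≤ ·) C) :
    MaxCDIndep (C ∪ {a : L | IsAtom a}) :=
  maxChain_union_atoms_maximal_CDIndep_general hLSM C hC
end

section
/- If L is a finite distributive lattice, then every maximal CD-independent subset of L has exactly length(L) + |Atoms(L)| elements. -/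
open scoped Classical

/-!
Two members of a CD-independent set are comparable or disjoint, so a maximal one, `X`, is a tree
under `≤`; it contains `⊥`, `⊤` and every atom. Maximality also fixes the shape of the tree: below
a non-atom `x ∈ X`, the maximal members of `X ∩ (⊥, x)` are either a single lower cover of `x` or
two disjoint elements with join `x`. Heights in a finite modular lattice satisfy
`h (a ⊔ b) + h (a ⊓ b) = h a + h b`, so induction on `x` gives `|X ∩ [⊥, x]| = h x + #{atoms ≤ x}`,
and `x = ⊤` is the theorem.
-/

open Set

section ChainRank

variable {L : Type*} [PartialOrder L] [Fintype L]

/-- `chainLen S` is `maxChainCard S - 1`. -/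
noncomputable def maxChainCard (S : Set L) : ℕ :=
  (Finset.univ.powerset.filter
      fun C : Finset L => ↑C ⊆ S ∧ IsChain (· ≤ ·) (C : Set L)).sup Finset.card

theorem card_le_maxChainCard {S : Set L} {C : Finset L} (hCS : ↑C ⊆ S)
    (hC : IsChain (· ≤ ·) (C : Set L)) : C.card ≤ maxChainCard S :=
  Finset.le_sup (f := Finset.card) <|
    Finset.mem_filter.2 ⟨Finset.mem_powerset.2 C.subset_univ, hCS, hC⟩

theorem exists_isChain_card_eq_maxChainCard (S : Set L) :
    ∃ C : Finset L, ↑C ⊆ S ∧ IsChain (· ≤ ·) (C : Set L) ∧ C.card = maxChainCard S := by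
  have hne : (Finset.univ.powerset.filter
      fun C : Finset L => ↑C ⊆ S ∧ IsChain (· ≤ ·) (C : Set L)).Nonempty := ⟨∅, by simp⟩
  obtain ⟨C, hC, hcard⟩ := Finset.exists_mem_eq_sup _ hne Finset.card
  simp only [Finset.mem_filter, Finset.mem_powerset] at hC
  exact ⟨C, hC.2.1, hC.2.2, hcard.symm⟩

/-- The height of `x` plus one. -/
noncomputable def chainRank (x : L) : ℕ :=
  maxChainCard (Iic x)

theorem one_le_chainRank (x : L) : 1 ≤ chainRank x :=
  card_le_maxChainCard (C := {x}) (by simp) (by simp)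

theorem chainRank_strictMono : StrictMono (chainRank : L → ℕ) := by
  intro x y hxy
  obtain ⟨C, hCx, hC, hcard⟩ := exists_isChain_card_eq_maxChainCard (Iic x)
  have hyC : y ∉ C := fun hy => hxy.not_ge (hCx hy)
  have hCy : ((insert y C : Finset L) : Set L) ⊆ Iic y := by
    rw [Finset.coe_insert]
    exact insert_subset le_rfl (hCx.trans (Iic_subset_Iic.2 hxy.le))
  have hchain : IsChain (· ≤ ·) ((insert y C : Finset L) : Set L) := by
    rw [Finset.coe_insert]
    exact hC.insert fun w hw _ => Or.inr ((hCx hw).trans hxy.le)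
  have := card_le_maxChainCard hCy hchain
  rwa [Finset.card_insert_of_notMem hyC, hcard] at this

theorem chainRank_bot [OrderBot L] : chainRank (⊥ : L) = 1 := by
  refine le_antisymm (Finset.sup_le fun C hC => ?_) (one_le_chainRank ⊥)
  simp only [Finset.mem_filter, Finset.mem_powerset] at hC
  exact Finset.card_le_one.2 fun a ha b hb =>
    (le_bot_iff.1 (hC.2.1 ha)).trans (le_bot_iff.1 (hC.2.1 hb)).symm

/-- The second largest element of a longest chain ending at `x` has rank one less; pushing it
up to a lower cover of `x` keeps its rank. -/
theorem exists_covBy_chainRank_eq {x : L} (hx : ¬IsMin x) :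
    ∃ y, y ⋖ x ∧ chainRank x = chainRank y + 1 := by
  obtain ⟨C, hCx, hC, hcard⟩ := exists_isChain_card_eq_maxChainCard (Iic x)
  change C.card = chainRank x at hcard
  obtain ⟨y, hyx⟩ := not_isMin_iff.1 hx
  have hxC : x ∈ C := by
    by_contra hxC
    have hchain : IsChain (· ≤ ·) ((insert x C : Finset L) : Set L) := by
      rw [Finset.coe_insert]
      exact hC.insert fun w hw _ => Or.inr (hCx hw)
    have : (insert x C).card ≤ chainRank x :=
      card_le_maxChainCard (by rw [Finset.coe_insert]; exact insert_subset le_rfl hCx) hchain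
    rw [Finset.card_insert_of_notMem hxC, hcard] at this
    omega
  have hne : (C.erase x).Nonempty := by
    rw [← Finset.card_pos, Finset.card_erase_of_mem hxC, hcard]
    have := chainRank_strictMono hyx
    have := one_le_chainRank y
    omega
  obtain ⟨z, hz⟩ := (C.erase x).exists_maximal hne
  have hzC : z ∈ C := Finset.mem_of_mem_erase hz.prop
  have hzx : z < x := lt_of_le_of_ne (hCx hzC) (Finset.ne_of_mem_erase hz.prop)
  have hCz : ((C.erase x : Finset L) : Set L) ⊆ Iic z := by
    intro w hw
    rcases eq_or_ne w z with rfl | hwz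
    · exact le_rfl
    · exact (hC (Finset.mem_of_mem_erase hw) hzC hwz).resolve_right
        fun hzw => hwz (hz.eq_of_ge hw hzw)
  have hz_rank : chainRank x ≤ chainRank z + 1 := by
    have : (C.erase x).card ≤ chainRank z := card_le_maxChainCard hCz (hC.mono (by simp))
    rw [Finset.card_erase_of_mem hxC, hcard] at this
    omega
  obtain ⟨y', hzy', hy'x⟩ := exists_le_covBy_of_lt hzx
  have := chainRank_strictMono.monotone hzy'
  have := chainRank_strictMono hy'x.lt
  exact ⟨y', hy'x, by omega⟩

end ChainRank

section ModularRank

variable {L : Type*} [Lattice L] [Fintype L]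

/-- Jordan–Dedekind: two distinct lower covers `y, z` of `x` have the common lower cover `y ⊓ z`,
so induction shows that they have the same rank. -/
theorem CovBy.chainRank_eq [IsLowerModularLattice L] {x y : L} (h : y ⋖ x) :
    chainRank x = chainRank y + 1 := by
  induction x using WellFoundedLT.induction generalizing y with
  | _ x ih =>
  obtain ⟨z, hz, hrank⟩ := exists_covBy_chainRank_eq h.lt.not_isMin
  rcases eq_or_ne y z with rfl | hyz
  · exact hrank
  have hsup : y ⊔ z = x := h.wcovBy.sup_eq hz.wcovBy hyz
  have hy : y ⊓ z ⋖ y :=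
    inf_covBy_of_covBy_sup_of_covBy_sup_left (hsup ▸ h) (hsup ▸ hz)
  have hz' : y ⊓ z ⋖ z :=
    inf_covBy_of_covBy_sup_of_covBy_sup_right (hsup ▸ h) (hsup ▸ hz)
  rw [hrank, ih z hz.lt hz', ih y h.lt hy]

theorem chainRank_sup_add_chainRank_inf [IsModularLattice L] (a b : L) :
    chainRank (a ⊔ b) + chainRank (a ⊓ b) = chainRank a + chainRank b := by
  induction b using WellFoundedLT.induction with
  | _ b ih =>
  by_cases hba : b ≤ a
  · rw [sup_eq_left.2 hba, inf_eq_right.2 hba]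
  obtain ⟨b', hb', hb'b⟩ :=
    exists_le_covBy_of_lt (inf_le_right.lt_of_not_ge fun h => hba (h.trans inf_le_left))
  have hinf : a ⊓ b' = a ⊓ b := le_antisymm (inf_le_inf_left a hb'b.le) (le_inf inf_le_left hb')
  -- modular law: `(b' ⊔ a) ⊓ b = b' ⊔ a ⊓ b = b'`
  have hcov : a ⊔ b' ⋖ a ⊔ b := by
    have : (a ⊔ b') ⊓ b ⋖ b := by
      rwa [sup_comm, sup_inf_assoc_of_le a hb'b.le, sup_eq_left.2 hb']
    simpa [sup_assoc, sup_eq_right.2 hb'b.le] using covBy_sup_of_inf_covBy_right this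
  have := ih b' hb'b.lt
  rw [hinf] at this
  rw [hcov.chainRank_eq, hb'b.chainRank_eq]
  omega

end ModularRank

section CDIndep

variable {L : Type*} [Lattice L] [OrderBot L] {X S : Set L} {x y y₁ y₂ w z : L}

theorem CDIndep.le_or_le_of_inf_ne_bot (hX : CDIndep X) (hx : x ∈ X) (hy : y ∈ X)
    (h : x ⊓ y ≠ ⊥) : x ≤ y ∨ y ≤ x := by
  by_contra! hxy
  exact h (hX x hx y hy hxy.1 hxy.2)

theorem CDIndep.inf_eq_bot_of_maximal (hX : CDIndep X) (hSX : S ⊆ X)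
    (h₁ : Maximal (· ∈ S) y₁) (h₂ : Maximal (· ∈ S) y₂) (hne : y₁ ≠ y₂) : y₁ ⊓ y₂ = ⊥ :=
  hX y₁ (hSX h₁.prop) y₂ (hSX h₂.prop) (fun h => hne (h₁.eq_of_le h₂.prop h))
    (fun h => hne (h₂.eq_of_le h₁.prop h).symm)

theorem CDIndep.le_of_maximal_of_inf_ne_bot (hX : CDIndep X) (hSX : S ⊆ X)
    (hy : Maximal (· ∈ S) y) (hw : w ∈ S) (h : w ⊓ y ≠ ⊥) : w ≤ y :=
  (hX.le_or_le_of_inf_ne_bot (hSX hw) (hSX hy.prop) h).elim id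
    fun hyw => (hy.eq_of_le hw hyw).ge

theorem MaxCDIndep.mem_of_forall (hX : MaxCDIndep X)
    (h : ∀ w ∈ X, z ≤ w ∨ w ≤ z ∨ w ⊓ z = ⊥) : z ∈ X := by
  have hcd : CDIndep (insert z X) := by
    rintro a (rfl | ha) b (rfl | hb) hab hba
    · exact absurd le_rfl hab
    · rw [inf_comm]
      exact ((h b hb).resolve_left hab).resolve_left hba
    · exact ((h a ha).resolve_left hba).resolve_left hab
    · exact hX.2.1 a ha b hb hab hba
  rw [← hX.2.2 _ (subset_univ _) hcd (subset_insert z X)]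
  exact mem_insert z X

theorem MaxCDIndep.bot_mem (hX : MaxCDIndep X) : ⊥ ∈ X :=
  hX.mem_of_forall fun _ _ => Or.inl bot_le

theorem MaxCDIndep.top_mem [OrderTop L] (hX : MaxCDIndep X) : ⊤ ∈ X :=
  hX.mem_of_forall fun _ _ => Or.inr (Or.inl le_top)

theorem MaxCDIndep.atom_mem (hX : MaxCDIndep X) (ha : IsAtom z) : z ∈ X := by
  refine hX.mem_of_forall fun w _ => ?_
  rcases ha.le_iff.1 (inf_le_right : w ⊓ z ≤ z) with h | h
  · exact Or.inr (Or.inr h)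
  · exact Or.inl (h ▸ inf_le_left)

/-- Elements of `X` not below `x ∈ X` are above `x` or disjoint from it, so they are compatible
with every `z ≤ x`. -/
theorem MaxCDIndep.mem_of_le_of_forall_lt (hX : MaxCDIndep X) (hx : x ∈ X) (hzx : z ≤ x)
    (h : ∀ w ∈ X, w < x → z ≤ w ∨ w ≤ z ∨ w ⊓ z = ⊥) : z ∈ X := by
  refine hX.mem_of_forall fun w hw => ?_
  by_cases hwx : w ≤ x
  · rcases hwx.lt_or_eq with hwx | rfl
    · exact h w hw hwx
    · exact Or.inl hzx
  by_cases hxw : x ≤ w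
  · exact Or.inl (hzx.trans hxw)
  · exact Or.inr (Or.inr (le_bot_iff.1 (hX.2.1 w hw x hx hwx hxw ▸ inf_le_inf_left w hzx)))

theorem MaxCDIndep.covBy_of_forall_le (hX : MaxCDIndep X) (hx : x ∈ X) (hyx : y < x)
    (h : ∀ w ∈ X ∩ Ioo ⊥ x, w ≤ y) : y ⋖ x := by
  refine ⟨hyx, fun u hyu hux => hyu.not_ge (h u ⟨?_, hyu.trans_le' bot_le, hux⟩)⟩
  refine hX.mem_of_le_of_forall_lt hx hux.le fun w hw hwx => Or.inr (Or.inl ?_)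
  rcases eq_bot_or_bot_lt w with rfl | hw₀
  · exact bot_le
  · exact (h w ⟨hw, hw₀, hwx⟩).trans hyu.le

end CDIndep

section DistribCDIndep

variable {L : Type*} [DistribLattice L] [OrderBot L] {X S : Set L} {x y₁ y₂ w : L}

theorem CDIndep.le_or_le_of_maximal (hX : CDIndep X) (hSX : S ⊆ X)
    (h₁ : Maximal (· ∈ S) y₁) (h₂ : Maximal (· ∈ S) y₂) (hw : w ∈ S)
    (h : w ⊓ (y₁ ⊔ y₂) ≠ ⊥) : w ≤ y₁ ∨ w ≤ y₂ := by
  rw [inf_sup_left] at h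
  by_cases hw₁ : w ⊓ y₁ = ⊥
  · rw [hw₁, bot_sup_eq] at h
    exact Or.inr (hX.le_of_maximal_of_inf_ne_bot hSX h₂ hw h)
  · exact Or.inl (hX.le_of_maximal_of_inf_ne_bot hSX h₁ hw hw₁)

/-- The join is compatible with every member of `X`, hence lies in `X`, and it cannot lie strictly
below `x`. -/
theorem MaxCDIndep.sup_eq_of_maximal (hX : MaxCDIndep X) (hx : x ∈ X)
    (h₁ : Maximal (· ∈ X ∩ Ioo ⊥ x) y₁) (h₂ : Maximal (· ∈ X ∩ Ioo ⊥ x) y₂) (hne : y₁ ≠ y₂) :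
    y₁ ⊔ y₂ = x := by
  have hle : y₁ ⊔ y₂ ≤ x := sup_le h₁.prop.2.2.le h₂.prop.2.2.le
  have hmem : y₁ ⊔ y₂ ∈ X := by
    refine hX.mem_of_le_of_forall_lt hx hle fun w hw hwx => ?_
    rcases eq_bot_or_bot_lt w with rfl | hw₀
    · exact Or.inr (Or.inl bot_le)
    by_cases hd : w ⊓ (y₁ ⊔ y₂) = ⊥
    · exact Or.inr (Or.inr hd)
    · refine Or.inr (Or.inl ?_)
      rcases hX.2.1.le_or_le_of_maximal inter_subset_left h₁ h₂ ⟨hw, hw₀, hwx⟩ hd with h | h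
      · exact h.trans le_sup_left
      · exact h.trans le_sup_right
  refine hle.eq_of_not_lt fun hlt => hne ?_
  have hy₁ : y₁ = y₁ ⊔ y₂ :=
    h₁.eq_of_le ⟨hmem, h₁.prop.2.1.trans_le le_sup_left, hlt⟩ le_sup_left
  exact h₂.eq_of_le h₁.prop (hy₁ ▸ le_sup_right) |>.symm

end DistribCDIndep

section Count

variable {L : Type*} [Lattice L] [OrderBot L] [Finite L] {x y₁ y₂ : L}

theorem ncard_inter_Ioo_eq_add {T : Set L} (hy₁ : y₁ < x) (hy₂ : y₂ < x) (hdisj : y₁ ⊓ y₂ = ⊥)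
    (hsplit : ∀ w ∈ T ∩ Ioo ⊥ x, w ≤ y₁ ∨ w ≤ y₂) :
    (T ∩ Ioo ⊥ x).ncard = (T ∩ Ioc ⊥ y₁).ncard + (T ∩ Ioc ⊥ y₂).ncard := by
  have hunion : T ∩ Ioo ⊥ x = T ∩ Ioc ⊥ y₁ ∪ T ∩ Ioc ⊥ y₂ := by
    ext w
    constructor
    · intro hw
      rcases hsplit w hw with h | h
      · exact Or.inl ⟨hw.1, hw.2.1, h⟩
      · exact Or.inr ⟨hw.1, hw.2.1, h⟩
    · rintro (⟨hw, hw₀, h⟩ | ⟨hw, hw₀, h⟩)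
      · exact ⟨hw, hw₀, h.trans_lt hy₁⟩
      · exact ⟨hw, hw₀, h.trans_lt hy₂⟩
  have hdisjoint : Disjoint (T ∩ Ioc ⊥ y₁) (T ∩ Ioc ⊥ y₂) := by
    refine disjoint_left.2 fun w ⟨_, hw₀, h₁⟩ ⟨_, _, h₂⟩ => hw₀.ne' ?_
    exact le_bot_iff.1 (hdisj ▸ le_inf h₁ h₂)
  rw [hunion, ncard_union_eq hdisjoint]

theorem MaxCDIndep.ncard_inter_Ioc_eq_add {X : Set L} (hX : MaxCDIndep X) (hxX : x ∈ X)
    (hatom : ¬IsAtom x) (hy₁ : y₁ < x) (hy₂ : y₂ < x) (hdisj : y₁ ⊓ y₂ = ⊥)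
    (hsplit : ∀ w ∈ X ∩ Ioo ⊥ x, w ≤ y₁ ∨ w ≤ y₂) :
    (X ∩ Ioc ⊥ x).ncard = (X ∩ Ioc ⊥ y₁).ncard + (X ∩ Ioc ⊥ y₂).ncard + 1 ∧
      ({a | IsAtom a} ∩ Ioc ⊥ x).ncard =
        ({a | IsAtom a} ∩ Ioc ⊥ y₁).ncard + ({a | IsAtom a} ∩ Ioc ⊥ y₂).ncard := by
  have hx₀ : ⊥ < x := bot_le.trans_lt hy₁
  constructor
  · rw [← Ioo_insert_right hx₀, inter_insert_of_mem hxX,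
      ncard_insert_of_notMem (fun h => h.2.2.false), ncard_inter_Ioo_eq_add hy₁ hy₂ hdisj hsplit]
  · rw [← Ioo_insert_right hx₀, inter_insert_of_notMem (show x ∉ {a : L | IsAtom a} from hatom),
      ncard_inter_Ioo_eq_add (T := {a | IsAtom a}) hy₁ hy₂ hdisj fun w hw =>
        hsplit w ⟨hX.atom_mem hw.1, hw.2⟩]

end Count

section Main

variable {L : Type*} [DistribLattice L] [Fintype L] [OrderBot L] {X : Set L}

/-- With `height x = chainRank x - 1`, this says `|X ∩ [⊥, x]| = height x + #{atoms ≤ x}`. -/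
theorem MaxCDIndep.ncard_inter_Ioc_add_two (hX : MaxCDIndep X) {x : L} (hxX : x ∈ X)
    (hx : x ≠ ⊥) :
    (X ∩ Ioc ⊥ x).ncard + 2 = chainRank x + ({a | IsAtom a} ∩ Ioc ⊥ x).ncard := by
  induction x using WellFoundedLT.induction with
  | _ x ih =>
  by_cases hatom : IsAtom x
  · rw [hatom.bot_covBy.Ioc_eq, inter_singleton_of_mem hxX,
      inter_singleton_of_mem (show x ∈ {a : L | IsAtom a} from hatom),
      ncard_singleton, hatom.bot_covBy.chainRank_eq, chainRank_bot]
  obtain ⟨a, ha, hax⟩ := (eq_bot_or_exists_atom_le x).resolve_left hx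
  obtain ⟨y₁, hy₁⟩ := (toFinite (X ∩ Ioo ⊥ x)).exists_maximal
    ⟨a, hX.atom_mem ha, ha.bot_lt, hax.lt_of_ne fun h => hatom (h ▸ ha)⟩
  obtain ⟨hy₁X, hy₁₀, hy₁x⟩ := hy₁.prop
  have ih₁ := ih y₁ hy₁x hy₁X hy₁₀.ne'
  by_cases hall : ∀ w ∈ X ∩ Ioo ⊥ x, w ≤ y₁
  · obtain ⟨hcX, hcA⟩ := hX.ncard_inter_Ioc_eq_add hxX hatom hy₁x (bot_lt_iff_ne_bot.2 hx)
      (inf_bot_eq y₁) fun w hw => Or.inl (hall w hw)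
    rw [hcX, hcA, (hX.covBy_of_forall_le hxX hy₁x hall).chainRank_eq]
    simp only [Ioc_self, inter_empty, ncard_empty]
    omega
  push Not at hall
  obtain ⟨w, hw, hwy₁⟩ := hall
  obtain ⟨y₂, hwy₂, hy₂⟩ := (toFinite (X ∩ Ioo ⊥ x)).exists_le_maximal hw
  have hne : y₁ ≠ y₂ := fun h => hwy₁ (h ▸ hwy₂)
  have hsup := hX.sup_eq_of_maximal hxX hy₁ hy₂ hne
  have hdisj := hX.2.1.inf_eq_bot_of_maximal inter_subset_left hy₁ hy₂ hne
  obtain ⟨hy₂X, hy₂₀, hy₂x⟩ := hy₂.prop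
  obtain ⟨hcX, hcA⟩ := hX.ncard_inter_Ioc_eq_add hxX hatom hy₁x hy₂x hdisj fun w hw =>
    hX.2.1.le_or_le_of_maximal inter_subset_left hy₁ hy₂ hw
      (by rw [hsup, inf_eq_left.2 hw.2.2.le]; exact hw.2.1.ne')
  have hrank := chainRank_sup_add_chainRank_inf y₁ y₂
  rw [hsup, hdisj, chainRank_bot] at hrank
  have ih₂ := ih y₂ hy₂x hy₂X hy₂₀.ne'
  omega

end Main

theorem latLen_add_one (L : Type*) [Lattice L] [Fintype L] [OrderTop L] :
    latLen L + 1 = chainRank (⊤ : L) := by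
  have hlen : latLen L = chainRank (⊤ : L) - 1 := by rw [chainRank, Iic_top]; rfl
  have := one_le_chainRank (⊤ : L)
  omega

theorem distrib_maxCDIndep_card {L : Type*} [DistribLattice L] [Fintype L]
    [BoundedOrder L] [Nontrivial L] (X : Set L) (hX : MaxCDIndep X) :
    X.ncard = latLen L + atomsCard L := by
  have hcount := hX.ncard_inter_Ioc_add_two hX.top_mem top_ne_bot
  have hX' : X ∩ Ioc ⊥ ⊤ = X \ {⊥} := by
    ext
    simp [bot_lt_iff_ne_bot]
  have hA : {a : L | IsAtom a} ∩ Ioc ⊥ ⊤ = {a | IsAtom a} :=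
    inter_eq_left.2 fun a ha => ⟨ha.bot_lt, le_top⟩
  rw [hX', hA] at hcount
  have := ncard_sdiff_singleton_add_one hX.bot_mem
  have := latLen_add_one L
  unfold atomsCard
  omega
end

section
/- If L is a finite meet-distributive lattice, then the number of join-irreducible elements of L equals the length of L. -/
open scoped Classical

/-!
For a covering pair `a ⋖ b` of a meet-distributive lattice there is exactly one join-irreducible
element below `b` but not below `a`. So `b ↦ #{j ∈ J(L) | j ≤ b}` vanishes at `⊥` and grows by
exactly one along every cover: it is strictly monotone, which bounds every chain by `#J(L) + 1`
elements, and a chain of covers built down from `⊤` attains the bound.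
-/

open Finset

section Lattice

variable {L : Type*} [Lattice L] {a b c x : L}

theorem CovBy.not_le_of_ne (hab : a ⋖ b) (hcb : c ⋖ b) (hca : c ≠ a) : ¬ c ≤ a :=
  fun h => hca ((hcb.eq_or_eq h hab.le).resolve_right hab.ne).symm

theorem SupIrred.le_of_lt_of_covBy (hb : SupIrred b) (hab : a ⋖ b) (hx : x < b) : x ≤ a := by
  by_contra hxa
  rcases hab.eq_or_eq le_sup_left (sup_le hab.le hx.le) with h | h
  · exact hxa (h ▸ le_sup_right)
  · exact (hb.2 h).elim hab.ne hx.ne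

theorem exists_supIrred_le_not_le [OrderBot L] [WellFoundedLT L] (h : ¬ b ≤ a) :
    ∃ j, SupIrred j ∧ j ≤ b ∧ ¬ j ≤ a := by
  obtain ⟨s, rfl, hs⟩ := exists_supIrred_decomposition b
  by_contra! hall
  exact h (Finset.sup_le fun j hj => hall j (hs hj) (le_sup (f := id) hj))

end Lattice

section MeetDistrib

variable {L : Type*} [Lattice L] [Fintype L] [BoundedOrder L] {a b c c' j x z : L}

theorem lowstar_le_of_covBy (h : c ⋖ b) : lowstar b ≤ c :=
  Finset.inf_le (f := id) (by simp [h])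

theorem MeetDistrib.eq_inf_sup_inf (hMD : MeetDistrib L) (hab : a ⋖ b) (hcb : c ⋖ b)
    (hz : lowstar b ≤ z) (hsup : a ⊔ z = b) : c = c ⊓ a ⊔ c ⊓ z := by
  calc c = c ⊓ (a ⊔ z) := by rw [hsup, inf_eq_left.2 hcb.le]
    _ = c ⊓ a ⊔ c ⊓ z :=
      hMD b (ne_bot_of_gt hab.lt) c ⟨lowstar_le_of_covBy hcb, hcb.le⟩ a
        ⟨lowstar_le_of_covBy hab, hab.le⟩ z ⟨hz, hsup ▸ le_sup_right⟩

theorem MeetDistrib.inf_covBy_of_covBy (hMD : MeetDistrib L) (hab : a ⋖ b) (hcb : c ⋖ b)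
    (hca : c ≠ a) : a ⊓ c ⋖ c := by
  refine ⟨inf_lt_right.2 (hab.not_le_of_ne hcb hca), fun z hz hzc => ?_⟩
  rcases hab.eq_or_eq le_sup_left (sup_le hab.le (hzc.le.trans hcb.le)) with h | h
  · exact hz.not_ge (le_inf (h ▸ le_sup_right) hzc.le)
  · have hlow : lowstar b ≤ z :=
      (le_inf (lowstar_le_of_covBy hab) (lowstar_le_of_covBy hcb)).trans hz.le
    have hc := hMD.eq_inf_sup_inf hab hcb hlow h
    rw [inf_eq_right.2 hzc.le, sup_eq_right.2 (inf_comm c a ▸ hz.le)] at hc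
    exact hzc.ne hc.symm

theorem MeetDistrib.not_inf_le (hMD : MeetDistrib L) (hab : a ⋖ b) (hcb : c ⋖ b)
    (hc'b : c' ⋖ b) (hca : c ≠ a) (hc'a : c' ≠ a) : ¬ c ⊓ c' ≤ a := by
  intro h
  have hc := hMD.eq_inf_sup_inf hab hcb (lowstar_le_of_covBy hc'b)
    (hab.wcovBy.sup_eq hc'b.wcovBy hc'a.symm)
  exact hab.not_le_of_ne hcb hca (hc ▸ sup_le inf_le_right h)

/-- The induction goes down to lower covers of `b`; two lower covers `c, c' ≠ a` satisfy
`¬ c ⊓ c' ≤ a`, which carries `j` from the cover above `j` to the cover above `x`. -/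
theorem MeetDistrib.supIrred_le_of_covBy (hMD : MeetDistrib L) (hj : SupIrred j) (hab : a ⋖ b)
    (hjb : j ≤ b) (hja : ¬ j ≤ a) (hxb : x ≤ b) (hxa : ¬ x ≤ a) : j ≤ x := by
  induction b using WellFoundedLT.induction generalizing a x with
  | ind b ih =>
  obtain rfl | hxb := hxb.eq_or_lt
  · exact hjb
  have hjb' : j < b := hjb.lt_of_ne fun h => hxa ((h ▸ hj).le_of_lt_of_covBy hab hxb)
  obtain ⟨c, hxc, hcb⟩ := exists_le_covBy_of_lt hxb
  obtain ⟨c', hjc', hc'b⟩ := exists_le_covBy_of_lt hjb'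
  have hca : c ≠ a := by rintro rfl; exact hxa hxc
  have hc'a : c' ≠ a := by rintro rfl; exact hja hjc'
  have below : ∀ {d}, d ⋖ b → d ≠ a → j ≤ d → ∀ y, y ≤ d → ¬ y ≤ a → j ≤ y :=
    fun hdb hda hjd y hyd hya => ih _ hdb.lt (hMD.inf_covBy_of_covBy hab hdb hda) hjd
      (fun h => hja (h.trans inf_le_left)) hyd (fun h => hya (h.trans inf_le_left))
  have hjc : j ≤ c :=
    (below hc'b hc'a hjc' _ inf_le_left (hMD.not_inf_le hab hc'b hcb hc'a hca)).trans
      inf_le_right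
  exact below hcb hca hjc x hxc hxa

theorem MeetDistrib.card_supIrred_below_of_covBy (hMD : MeetDistrib L) (hab : a ⋖ b) :
    #{j | SupIrred j ∧ j ≤ b} = #{j | SupIrred j ∧ j ≤ a} + 1 := by
  obtain ⟨m, hm, hmb, hma⟩ := exists_supIrred_le_not_le hab.lt.not_ge
  have hinsert : univ.filter (fun j => SupIrred j ∧ j ≤ b) =
      insert m (univ.filter fun j => SupIrred j ∧ j ≤ a) := by
    ext j
    simp only [mem_filter, mem_univ, true_and, mem_insert]
    constructor
    · rintro ⟨hj, hjb⟩
      by_cases hja : j ≤ a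
      · exact Or.inr ⟨hj, hja⟩
      · exact Or.inl (le_antisymm (hMD.supIrred_le_of_covBy hj hab hjb hja hmb hma)
          (hMD.supIrred_le_of_covBy hm hab hmb hma hjb hja))
    · rintro (rfl | ⟨hj, hja⟩)
      · exact ⟨hm, hmb⟩
      · exact ⟨hj, hja.trans hab.le⟩
  rw [hinsert, card_insert_of_notMem (by simp [hma])]

end MeetDistrib

section Length

variable {L : Type*} [PartialOrder L] {f : L → ℕ}

theorem strictMono_of_covBy_succ [Finite L] (hf : ∀ a b : L, a ⋖ b → f b = f a + 1) :
    StrictMono f := by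
  intro x y hxy
  induction y using WellFoundedLT.induction with
  | ind y ih =>
  obtain ⟨c, hxc, hcy⟩ := exists_le_covBy_of_lt hxy
  rw [hf c y hcy, Nat.lt_succ_iff]
  obtain hxc | rfl := hxc.lt_or_eq
  · exact (ih c hcy.lt hxc).le
  · exact le_rfl

theorem card_le_of_isChain_of_strictMono [OrderTop L] (hf : StrictMono f) {C : Finset L}
    (hC : IsChain (· ≤ ·) (C : Set L)) : #C ≤ f ⊤ + 1 := by
  have hinj : Set.InjOn f C := by
    intro x hx y hy hxy
    by_contra hne
    rcases hC hx hy hne with h | h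
    · exact (hf (h.lt_of_ne hne)).ne hxy
    · exact (hf (h.lt_of_ne (Ne.symm hne))).ne' hxy
  calc #C ≤ #(range (f ⊤ + 1)) :=
        card_le_card_of_injOn f (fun x _ => mem_range.2 (Nat.lt_succ_of_le (hf.monotone le_top)))
          hinj
    _ = f ⊤ + 1 := card_range _

theorem exists_isChain_card_eq [Finite L] [OrderBot L] (hf0 : f ⊥ = 0)
    (hf : ∀ a b : L, a ⋖ b → f b = f a + 1) (b : L) :
    ∃ C : Finset L, IsChain (· ≤ ·) (C : Set L) ∧ (∀ x ∈ C, x ≤ b) ∧ #C = f b + 1 := by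
  induction b using WellFoundedLT.induction with
  | ind b ih =>
  obtain rfl | hb := eq_or_ne b ⊥
  · exact ⟨{⊥}, by simp, by simp, by simp [hf0]⟩
  obtain ⟨a, -, hab⟩ := exists_le_covBy_of_lt (bot_lt_iff_ne_bot.2 hb)
  obtain ⟨C, hC, hCa, hcard⟩ := ih a hab.lt
  have hCb : ∀ x ∈ C, x ≤ b := fun x hx => (hCa x hx).trans hab.le
  refine ⟨insert b C, ?_, ?_, ?_⟩
  · rw [coe_insert]
    exact hC.insert fun x hx _ => Or.inr (hCb x hx)
  · simpa using hCb
  · rw [card_insert_of_notMem fun h => hab.lt.not_ge (hCa b h), hcard, hf a b hab]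

end Length

theorem latLen_eq_of_covBy_succ {L : Type*} [Lattice L] [Fintype L] [BoundedOrder L]
    {f : L → ℕ} (hf0 : f ⊥ = 0) (hf : ∀ a b : L, a ⋖ b → f b = f a + 1) : latLen L = f ⊤ := by
  obtain ⟨C, hC, -, hcard⟩ := exists_isChain_card_eq hf0 hf ⊤
  suffices h : (univ.powerset.filter fun C : Finset L =>
      ↑C ⊆ (Set.univ : Set L) ∧ IsChain (· ≤ ·) (C : Set L)).sup card = f ⊤ + 1 by
    rw [latLen, chainLen, h, Nat.add_sub_cancel]
  refine le_antisymm (Finset.sup_le fun D hD => ?_) ?_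
  · exact card_le_of_isChain_of_strictMono (strictMono_of_covBy_succ hf) (mem_filter.1 hD).2.2
  · exact hcard ▸ le_sup (f := card) (by simp [hC])

theorem meetDistrib_card_supIrred_eq_length {L : Type*} [Lattice L] [Fintype L]
    [BoundedOrder L] (hMD : MeetDistrib L) :
    {a : L | SupIrred a}.ncard = latLen L := by
  have hbot : #{j : L | SupIrred j ∧ j ≤ ⊥} = 0 := by
    simpa using fun _ => SupIrred.ne_bot
  rw [latLen_eq_of_covBy_succ hbot fun _ _ => hMD.card_supIrred_below_of_covBy,
    ← Set.ncard_coe_finset]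
  simp
end

section
/- Let L be a finite meet-distributive lattice and let a₁, ..., a_k be pairwise incomparable elements with a_i ∧ a_j = 0 for all i ≠ j. Then length(↓a₁) + ... + length(↓a_k) ≤ length(L), where ↓a denotes the principal ideal of a. -/
/-!
Write `J(y)` for the set of join-irreducible elements below `y`. In any finite lattice
`y ↦ |J(y)|` is strictly monotone (every element is a join of join-irreducibles), so
`length(↓y) ≤ |J(y)|`; and `a_i ∧ a_j = 0` makes the sets `J(a_i)` pairwise disjoint inside
`J(1)`. Meet-distributivity supplies the reverse bound `|J(1)| ≤ length(L)`: if `m ⋖ y`, at most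
one join-irreducible lies below `y` but not below `m`. The key point is that distributivity of
`[y_*, y]` gives `u ∧ v ⋖ v` for distinct lower covers `u, v` of `y`; this lets a configuration of
two lower covers of `y` and a join-irreducible `p < y` be replaced by one below a lower cover of
`y` above `p`, so both facts follow by induction on `y`.
-/

open scoped Classical

open Finset

section ChainLength

variable {L : Type*} [Lattice L] [Fintype L]

lemma card_sub_one_le_chainLen {S : Set L} {C : Finset L} (hCS : ↑C ⊆ S)
    (hC : IsChain (· ≤ ·) (C : Set L)) : #C - 1 ≤ chainLen S :=
  Nat.sub_le_sub_right (le_sup (by simp [hCS, hC])) 1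

lemma exists_isChain_card_eq_chainLen_add_one {S : Set L} (hS : S.Nonempty) :
    ∃ C : Finset L, ↑C ⊆ S ∧ IsChain (· ≤ ·) (C : Set L) ∧ #C = chainLen S + 1 := by
  obtain ⟨C, hC, hcard⟩ := exists_mem_eq_sup
    (univ.powerset.filter fun C : Finset L => ↑C ⊆ S ∧ IsChain (· ≤ ·) (C : Set L))
    ⟨∅, by simp⟩ card
  obtain ⟨x, hx⟩ := hS
  have hpos : 1 ≤ #C := by
    rw [← hcard]
    exact le_sup (f := card) (b := {x}) (by simp [hx, Set.subsingleton_singleton.isChain])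
  simp only [mem_filter] at hC
  refine ⟨C, hC.2.1, hC.2.2, ?_⟩
  rw [chainLen, ← hcard]
  omega

lemma chainLen_Iic_strictMono : StrictMono fun y : L => chainLen (Set.Iic y) := by
  intro m y hmy
  show chainLen (Set.Iic m) < chainLen (Set.Iic y)
  obtain ⟨C, hCm, hC, hcard⟩ :=
    exists_isChain_card_eq_chainLen_add_one (Set.nonempty_Iic (a := m))
  have hyC : y ∉ C := fun hy => (hCm hy).not_gt hmy
  have hCy : ↑(insert y C) ⊆ Set.Iic y := by
    rw [coe_insert]
    exact Set.insert_subset le_rfl fun x hx => (hCm hx).trans hmy.le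
  have := card_sub_one_le_chainLen hCy
    (by rw [coe_insert]; exact hC.insert fun x hx _ => Or.inr ((hCm hx).trans hmy.le))
  rw [card_insert_of_notMem hyC, hcard] at this
  omega

lemma chainLen_Iic_le_of_strictMono {f : L → ℕ} (hf : StrictMono f) (b : L) :
    chainLen (Set.Iic b) ≤ f b := by
  rw [chainLen, Nat.sub_le_iff_le_add]
  refine Finset.sup_le fun C hC => ?_
  simp only [mem_filter] at hC
  obtain ⟨hCb, hC⟩ := hC.2
  calc #C ≤ #(range (f b + 1)) := by
        refine card_le_card_of_injOn f (fun x hx => ?_) fun x hx z hz hxz => ?_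
        · simpa [Nat.lt_succ_iff] using hf.monotone (hCb hx)
        · by_contra hne
          rcases hC hx hz hne with h | h
          · exact (hf (lt_of_le_of_ne h hne)).ne hxz
          · exact (hf (lt_of_le_of_ne h (Ne.symm hne))).ne' hxz
    _ = f b + 1 := card_range _

end ChainLength

section SupIrreducibles

variable {L : Type*} [Lattice L] [Fintype L]

noncomputable def supIrredsBelow (y : L) : Finset L := {p | SupIrred p ∧ p ≤ y}

@[simp]
lemma mem_supIrredsBelow {y p : L} : p ∈ supIrredsBelow y ↔ SupIrred p ∧ p ≤ y := by
  simp [supIrredsBelow]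

lemma supIrredsBelow_mono : Monotone (supIrredsBelow : L → Finset L) :=
  fun _ _ hxy _ hp => mem_supIrredsBelow.2 ((mem_supIrredsBelow.1 hp).imp_right (·.trans hxy))

lemma supIrredsBelow_inf (a b : L) :
    supIrredsBelow (a ⊓ b) = supIrredsBelow a ∩ supIrredsBelow b := by
  ext p
  simp only [mem_supIrredsBelow, mem_inter, le_inf_iff]
  tauto

variable [OrderBot L]

lemma supIrredsBelow_bot : supIrredsBelow (⊥ : L) = ∅ :=
  eq_empty_of_forall_notMem fun _ hp =>
    (mem_supIrredsBelow.1 hp).1.ne_bot (le_bot_iff.1 (mem_supIrredsBelow.1 hp).2)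

lemma disjoint_supIrredsBelow {a b : L} (hab : a ⊓ b = ⊥) :
    Disjoint (supIrredsBelow a) (supIrredsBelow b) := by
  rw [disjoint_iff_inter_eq_empty, ← supIrredsBelow_inf, hab, supIrredsBelow_bot]

lemma card_supIrredsBelow_strictMono : StrictMono fun y : L => #(supIrredsBelow y) := by
  intro x y hxy
  refine card_lt_card (Finset.ssubset_iff_subset_ne.2 ⟨supIrredsBelow_mono hxy.le, fun heq => ?_⟩)
  obtain ⟨s, hsy, hs⟩ := exists_supIrred_decomposition y
  refine hxy.not_ge (hsy ▸ Finset.sup_le fun p hp => ?_)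
  have : p ∈ supIrredsBelow x := heq ▸ mem_supIrredsBelow.2 ⟨hs hp, hsy ▸ le_sup (f := id) hp⟩
  exact (mem_supIrredsBelow.1 this).2

end SupIrreducibles

section MeetDistributive

variable {L : Type*} [Lattice L] [Fintype L] [BoundedOrder L]

lemma lowstar_le_of_covBy_s10 {m y : L} (h : m ⋖ y) : lowstar y ≤ m :=
  Finset.inf_le (f := id) (by simp [h])

lemma MeetDistrib.inf_sup_eq_of_covBy (hMD : MeetDistrib L) {x u w y : L} (hx : x ⋖ y)
    (hu : u ⋖ y) (hw : lowstar y ≤ w) (hwy : w ≤ y) : x ⊓ (u ⊔ w) = x ⊓ u ⊔ x ⊓ w :=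
  hMD y hx.lt.ne_bot x ⟨lowstar_le_of_covBy_s10 hx, hx.le⟩ u ⟨lowstar_le_of_covBy_s10 hu, hu.le⟩ w
    ⟨hw, hwy⟩

lemma MeetDistrib.inf_covBy_of_covBy_s10 (hMD : MeetDistrib L) {u v y : L} (hu : u ⋖ y)
    (hv : v ⋖ y) (huv : u ≠ v) : u ⊓ v ⋖ v := by
  refine ⟨inf_lt_right.2 fun h => hv.2 (h.lt_of_ne huv.symm) hu.lt, fun w huvw hwv => ?_⟩
  have hwu : ¬ w ≤ u := fun h => huvw.not_ge (le_inf h hwv.le)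
  have hsup : u ⊔ w = y := (sup_le hu.le (hwv.le.trans hv.le)).eq_of_not_lt
    (hu.2 (left_lt_sup.2 hwu))
  have hdistrib := hMD.inf_sup_eq_of_covBy hv hu
    ((le_inf (lowstar_le_of_covBy_s10 hu) (lowstar_le_of_covBy_s10 hv)).trans huvw.le)
    (hwv.le.trans hv.le)
  rw [hsup, inf_eq_left.2 hv.le, inf_comm v u, inf_eq_right.2 hwv.le,
    sup_eq_right.2 huvw.le] at hdistrib
  exact hwv.ne hdistrib.symm

lemma MeetDistrib.inf_ne_inf_of_covBy (hMD : MeetDistrib L) {m₁ m₂ m y : L} (h₁ : m₁ ⋖ y)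
    (h₂ : m₂ ⋖ y) (hm : m ⋖ y) (h₁₂ : m₁ ≠ m₂) (hm₁ : m ≠ m₁) : m₁ ⊓ m ≠ m₂ ⊓ m := by
  intro heq
  have hdistrib := hMD.inf_sup_eq_of_covBy hm h₁ (lowstar_le_of_covBy_s10 h₂) h₂.le
  rw [h₁.wcovBy.sup_eq h₂.wcovBy h₁₂, inf_eq_left.2 hm.le, inf_comm m m₁, inf_comm m m₂,
    ← heq, sup_idem] at hdistrib
  have hle : m ≤ m₁ := hdistrib ▸ inf_le_left
  exact hm.2 (hle.lt_of_ne hm₁) h₁.lt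

lemma MeetDistrib.le_or_le_of_supIrred (hMD : MeetDistrib L) {m₁ m₂ y p : L} (h₁ : m₁ ⋖ y)
    (h₂ : m₂ ⋖ y) (h₁₂ : m₁ ≠ m₂) (hp : SupIrred p) (hpy : p ≤ y) : p ≤ m₁ ∨ p ≤ m₂ := by
  induction y using WellFoundedLT.induction generalizing m₁ m₂ with | ind y ih
  rcases hpy.lt_or_eq with hpy | rfl
  · by_contra! hpm
    obtain ⟨m, hpm', hm⟩ := exists_le_covBy_of_lt hpy
    have hm₁ : m ≠ m₁ := fun h => hpm.1 (h ▸ hpm')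
    have hm₂ : m ≠ m₂ := fun h => hpm.2 (h ▸ hpm')
    rcases ih m hm.lt (hMD.inf_covBy_of_covBy_s10 h₁ hm hm₁.symm)
        (hMD.inf_covBy_of_covBy_s10 h₂ hm hm₂.symm) (hMD.inf_ne_inf_of_covBy h₁ h₂ hm h₁₂ hm₁)
        hpm' with h | h
    · exact hpm.1 (h.trans inf_le_left)
    · exact hpm.2 (h.trans inf_le_left)
  · exact (hp.2 (h₁.wcovBy.sup_eq h₂.wcovBy h₁₂)).imp (fun h => absurd h h₁.ne)
      fun h => absurd h h₂.ne

lemma MeetDistrib.eq_of_supIrred_not_le (hMD : MeetDistrib L) {m y p q : L} (hm : m ⋖ y)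
    (hp : SupIrred p) (hq : SupIrred q) (hpy : p ≤ y) (hqy : q ≤ y) (hpm : ¬ p ≤ m)
    (hqm : ¬ q ≤ m) : p = q := by
  induction y using WellFoundedLT.induction generalizing m p q with | ind y ih
  have below : ∀ {p q}, SupIrred p → SupIrred q → p < y → q ≤ y → ¬ p ≤ m → ¬ q ≤ m →
      p = q := by
    intro p q hp hq hpy hqy hpm hqm
    obtain ⟨m₁, hpm₁, hm₁⟩ := exists_le_covBy_of_lt hpy
    have hmm₁ : m ≠ m₁ := fun h => hpm (h ▸ hpm₁)
    have hqm₁ : q ≤ m₁ := (hMD.le_or_le_of_supIrred hm hm₁ hmm₁ hq hqy).resolve_left hqm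
    exact ih m₁ hm₁.lt (hMD.inf_covBy_of_covBy_s10 hm hm₁ hmm₁) hp hq hpm₁ hqm₁
      (fun h => hpm (h.trans inf_le_left)) (fun h => hqm (h.trans inf_le_left))
  rcases hpy.lt_or_eq with hpy | rfl
  · exact below hp hq hpy hqy hpm hqm
  rcases hqy.lt_or_eq with hqy | rfl
  · exact (below hq hp hqy le_rfl hqm hpm).symm
  · rfl

lemma MeetDistrib.card_supIrredsBelow_le_succ_of_covBy (hMD : MeetDistrib L) {m y : L}
    (hm : m ⋖ y) : #(supIrredsBelow y) ≤ #(supIrredsBelow m) + 1 := by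
  have hnew : #(supIrredsBelow y \ supIrredsBelow m) ≤ 1 := by
    refine card_le_one.2 fun p hp q hq => ?_
    simp only [mem_sdiff, mem_supIrredsBelow, not_and] at hp hq
    exact hMD.eq_of_supIrred_not_le hm hp.1.1 hq.1.1 hp.1.2 hq.1.2 (hp.2 hp.1.1) (hq.2 hq.1.1)
  have := card_le_card_sdiff_add_card (s := supIrredsBelow y) (t := supIrredsBelow m)
  omega

lemma MeetDistrib.card_supIrredsBelow_le_chainLen (hMD : MeetDistrib L) (y : L) :
    #(supIrredsBelow y) ≤ chainLen (Set.Iic y) := by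
  induction y using WellFoundedLT.induction with | ind y ih
  rcases (bot_le (a := y)).eq_or_lt with rfl | hy
  · simp [supIrredsBelow_bot]
  obtain ⟨m, -, hm⟩ := exists_le_covBy_of_lt hy
  calc #(supIrredsBelow y) ≤ #(supIrredsBelow m) + 1 := hMD.card_supIrredsBelow_le_succ_of_covBy hm
    _ ≤ chainLen (Set.Iic m) + 1 := Nat.add_le_add_right (ih m hm.lt) 1
    _ ≤ chainLen (Set.Iic y) := chainLen_Iic_strictMono hm.lt

end MeetDistributive

theorem sum_ideal_lengths_le_length_general {L : Type*} [Lattice L] [Fintype L]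
    [BoundedOrder L] (hMD : MeetDistrib L) (k : ℕ) (a : Fin k → L)
    (hmeet : ∀ i j, i ≠ j → a i ⊓ a j = ⊥) :
    (∑ i, chainLen (Set.Iic (a i))) ≤ latLen L := by
  calc ∑ i, chainLen (Set.Iic (a i))
      ≤ ∑ i, #(supIrredsBelow (a i)) :=
        sum_le_sum fun i _ => chainLen_Iic_le_of_strictMono card_supIrredsBelow_strictMono (a i)
    _ = #(univ.biUnion fun i => supIrredsBelow (a i)) :=
        (card_biUnion fun i _ j _ hij => disjoint_supIrredsBelow (hmeet i j hij)).symm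
    _ ≤ #(supIrredsBelow (⊤ : L)) :=
        card_le_card (biUnion_subset.2 fun i _ => supIrredsBelow_mono le_top)
    _ ≤ chainLen (Set.Iic (⊤ : L)) := hMD.card_supIrredsBelow_le_chainLen ⊤
    _ = latLen L := by rw [Set.Iic_top]; rfl

theorem sum_ideal_lengths_le_length {L : Type*} [Lattice L] [Fintype L]
    [BoundedOrder L] (hMD : MeetDistrib L) (k : ℕ) (a : Fin k → L)
    (hinc : ∀ i j, i ≠ j → ¬ a i ≤ a j)
    (hmeet : ∀ i j, i ≠ j → a i ⊓ a j = ⊥) :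
    (∑ i, chainLen (Set.Iic (a i))) ≤ latLen L :=
  sum_ideal_lengths_le_length_general hMD k a hmeet
end

section
/- Let F be a finite set of circles in the plane and let Lat(F) be the set of subsets Y of F closed under the restricted convex hull operation (i.e., whenever C ∈ F lies in the convex hull of the union of the members of Y, then C ∈ Y), ordered by inclusion. Then Lat(F) is a lattice and it is meet-distributive. -/
open scoped Classical

/-- A bundled finite bounded lattice. -/
structure FinBddLattice where
  carrier : Type
  [lat : Lattice carrier]
  [fin : Fintype carrier]
  [bdd : BoundedOrder carrier]

attribute [instance] FinBddLattice.lat FinBddLattice.fin FinBddLattice.bdd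

/-- `C` is a circle in the plane (possibly of radius `0`). -/
def IsCircle (C : Set (ℝ × ℝ)) : Prop :=
  ∃ u v r : ℝ, 0 ≤ r ∧ C = {p : ℝ × ℝ | (p.1 - u) ^ 2 + (p.2 - v) ^ 2 = r ^ 2}

/-- `Y` is a closed subset of the finite set `F` of circles: every member of `F`
lying in the convex hull of the union of the members of `Y` belongs to `Y`. -/
def ClosedIn (F : Finset (Set (ℝ × ℝ))) (Y : Set (Set (ℝ × ℝ))) : Prop :=
  Y ⊆ ↑F ∧ ∀ C ∈ F, C ⊆ convexHull ℝ (⋃₀ Y) → C ∈ Y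

/-!
The geometric input is anti-exchange for circles: if `C ≠ D` and `C ⊄ convexHull ℝ K` for a
compact `K`, then `C` and `D` cannot each lie in the hull of `K` and the other. In every direction
`w` in which `C` sticks out of `convexHull ℝ K`, the two inclusions force `C` and `D` to reach
equally far, i.e. to have the same support value `w · c + r |w|`; two such functions agreeing on
an open set have the same center and radius.

Anti-exchange makes every lower cover of a closed family `u` contain all non-extreme members of
`u`, hence so does `u_*`. Every family between `u \ ext u` and `u` is closed, so joins in
`[u_*, u]` are unions and the interval is distributive.
-/

open Set Topology

/-- By Carathéodory, `convexHull ℝ K` is the image of the compact set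
`stdSimplex ℝ (Fin m) × Kᵐ` under `(w, z) ↦ ∑ wᵢ • zᵢ`, where `m = finrank ℝ E + 1`. -/
theorem IsCompact.convexHull_of_finiteDimensional {E : Type*} [AddCommGroup E] [Module ℝ E]
    [TopologicalSpace E] [IsTopologicalAddGroup E] [ContinuousSMul ℝ E] [FiniteDimensional ℝ E]
    {K : Set E} (hK : IsCompact K) : IsCompact (convexHull ℝ K) := by
  rcases K.eq_empty_or_nonempty with rfl | ⟨x₀, hx₀⟩
  · simp
  set m := Module.finrank ℝ E + 1
  suffices convexHull ℝ K = (fun p : (Fin m → ℝ) × (Fin m → E) => ∑ i, p.1 i • p.2 i) ''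
      (stdSimplex ℝ (Fin m) ×ˢ univ.pi fun _ => K) by
    rw [this]
    exact ((isCompact_stdSimplex ℝ _).prod (isCompact_univ_pi fun _ => hK)).image (by fun_prop)
  refine Subset.antisymm (fun x hx => ?_) ?_
  · obtain ⟨ι, _, z, w, hzK, hz, hw0, hw1, rfl⟩ := eq_pos_convex_span_of_mem_convexHull hx
    have hι : Fintype.card ι ≤ m :=
      hz.card_le_finrank_succ.trans (Nat.succ_le_succ (Submodule.finrank_le _))
    let e : ι ↪ Fin m := (Fintype.equivFin ι).toEmbedding.trans (Fin.castLEEmb hι)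
    have hW (i : Fin m) (hi : i ∉ range e) : Function.extend e w 0 i = 0 := by
      rw [Function.extend_apply' _ _ _ (by simpa using hi), Pi.zero_apply]
    refine ⟨(Function.extend e w 0, Function.extend e z fun _ => x₀),
      ⟨⟨fun i => ?_, ?_⟩, fun i _ => ?_⟩, ?_⟩
    · dsimp only
      by_cases hi : i ∈ range e
      · obtain ⟨j, rfl⟩ := hi
        rw [e.injective.extend_apply]
        exact (hw0 j).le
      · rw [hW i hi]
    · rw [← hw1]
      exact (Fintype.sum_of_injective e e.injective _ _ hW
        fun j => (e.injective.extend_apply _ _ j).symm).symm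
    · dsimp only
      by_cases hi : i ∈ range e
      · obtain ⟨j, rfl⟩ := hi
        rw [e.injective.extend_apply]
        exact hzK (mem_range_self j)
      · rw [Function.extend_apply' _ _ _ (by simpa using hi)]
        exact hx₀
    · refine (Fintype.sum_of_injective e e.injective _ _ (fun i hi => ?_) fun j => ?_).symm
      · simp only [hW i hi, zero_smul]
      · simp only [e.injective.extend_apply]
  · rintro _ ⟨⟨w, z⟩, ⟨hw, hz⟩, rfl⟩
    exact (convex_convexHull ℝ K).sum_mem (fun i _ => hw.1 i) hw.2
      fun i _ => subset_convexHull ℝ K (hz i (mem_univ i))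

theorem le_of_subset_convexHull_union {E : Type*} [AddCommGroup E] [Module ℝ E]
    {f : E → ℝ} (hf : IsLinearMap ℝ f) {A B K : Set E} {a b : ℝ}
    (hA : ∃ p ∈ A, f p = a) (hB : ∀ q ∈ B, f q ≤ b) (hK : ∀ q ∈ K, f q < a)
    (hAKB : A ⊆ convexHull ℝ (K ∪ B)) : a ≤ b := by
  by_contra! hba
  obtain ⟨p, hpA, rfl⟩ := hA
  have hKB : K ∪ B ⊆ {q | f q < f p} := union_subset hK fun q hq => (hB q hq).trans_lt hba
  exact lt_irrefl (f p) (convexHull_min hKB (convex_halfSpace_lt hf _) (hAKB hpA))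

namespace PlaneCircle

-- `ℝ × ℝ` carries the sup norm, so the Euclidean structure is spelled out by hand.
def dot (w p : ℝ × ℝ) : ℝ := w.1 * p.1 + w.2 * p.2

lemma isLinearMap_dot (w : ℝ × ℝ) : IsLinearMap ℝ (dot w) :=
  ⟨fun p q => by simp only [dot, Prod.fst_add, Prod.snd_add]; ring,
    fun c p => by simp only [dot, Prod.smul_fst, Prod.smul_snd, smul_eq_mul]; ring⟩

lemma dot_self_eq_zero {w : ℝ × ℝ} : dot w w = 0 ↔ w = 0 := by
  simp [dot, Prod.ext_iff, add_eq_zero_iff_of_nonneg, mul_self_nonneg]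

lemma dot_self_nonneg (w : ℝ × ℝ) : 0 ≤ dot w w :=
  add_nonneg (mul_self_nonneg _) (mul_self_nonneg _)

lemma dot_self_pos {w : ℝ × ℝ} (hw : w ≠ 0) : 0 < dot w w :=
  (dot_self_nonneg w).lt_of_ne' (dot_self_eq_zero.not.mpr hw)

lemma continuous_dot : Continuous fun z : (ℝ × ℝ) × (ℝ × ℝ) => dot z.1 z.2 := by
  unfold dot; fun_prop

lemma continuousLinearMap_apply_eq_dot (f : ℝ × ℝ →L[ℝ] ℝ) (p : ℝ × ℝ) :
    f p = dot (f (1, 0), f (0, 1)) p := by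
  calc f p = f (p.1 • (1, 0) + p.2 • (0, 1)) := by congr 1; ext <;> simp
    _ = dot (f (1, 0), f (0, 1)) p := by simp only [map_add, map_smul, smul_eq_mul, dot]; ring

lemma exists_dot_lt_of_notMem {L : Set (ℝ × ℝ)} (hconv : Convex ℝ L) (hclosed : IsClosed L)
    {x : ℝ × ℝ} (hx : x ∉ L) : ∃ w, ∀ q ∈ L, dot w q < dot w x := by
  obtain ⟨f, s, hf, hs⟩ := geometric_hahn_banach_closed_point hconv hclosed hx
  refine ⟨(f (1, 0), f (0, 1)), fun q hq => ?_⟩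
  rw [← continuousLinearMap_apply_eq_dot, ← continuousLinearMap_apply_eq_dot]
  exact (hf q hq).trans hs

lemma isOpen_setOf_forall_dot_lt {L : Set (ℝ × ℝ)} (hL : IsCompact L) {g : ℝ × ℝ → ℝ}
    (hg : Continuous g) : IsOpen {w | ∀ q ∈ L, dot w q < g w} :=
  isOpen_iff_mem_nhds.mpr fun _ hw => hL.eventually_forall_of_forall_eventually fun q hq =>
    (isOpen_lt continuous_dot (hg.comp continuous_fst)).mem_nhds (hw q hq)

def circleSet (u v r : ℝ) : Set (ℝ × ℝ) := {p | (p.1 - u) ^ 2 + (p.2 - v) ^ 2 = r ^ 2}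

/-- `w ↦ max_{p ∈ C} w · p` for the circle `C = circleSet u v r`, `0 ≤ r`. -/
noncomputable def circleSupport (u v r : ℝ) (w : ℝ × ℝ) : ℝ := dot w (u, v) + r * √(dot w w)

lemma continuous_circleSupport (u v r : ℝ) : Continuous (circleSupport u v r) := by
  unfold circleSupport dot; fun_prop

lemma dot_le_circleSupport {u v r : ℝ} (hr : 0 ≤ r) {p : ℝ × ℝ} (hp : p ∈ circleSet u v r)
    (w : ℝ × ℝ) : dot w p ≤ circleSupport u v r w := by
  have hCS : w.1 * (p.1 - u) + w.2 * (p.2 - v) ≤ r * √(dot w w) := by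
    rw [← Real.sqrt_sq hr, ← Real.sqrt_mul (sq_nonneg r), ← hp]
    refine (le_abs_self _).trans (Real.abs_le_sqrt ?_)
    unfold dot
    nlinarith [sq_nonneg (w.1 * (p.2 - v) - w.2 * (p.1 - u))]
  simp only [circleSupport, dot] at hCS ⊢
  linarith

lemma exists_dot_eq_circleSupport (u v r : ℝ) (w : ℝ × ℝ) :
    ∃ p ∈ circleSet u v r, dot w p = circleSupport u v r w := by
  rcases eq_or_ne w 0 with rfl | hw
  · exact ⟨(u + r, v), by simp [circleSet], by simp [circleSupport, dot]⟩
  set n := √(dot w w)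
  have hn : 0 < n := Real.sqrt_pos.mpr (dot_self_pos hw)
  have hn2 : w.1 ^ 2 + w.2 ^ 2 = n ^ 2 := by
    rw [Real.sq_sqrt (dot_self_nonneg w), dot]; ring
  refine ⟨(u + r * w.1 / n, v + r * w.2 / n), ?_, ?_⟩
  · show (u + r * w.1 / n - u) ^ 2 + (v + r * w.2 / n - v) ^ 2 = r ^ 2
    field_simp
    linear_combination r ^ 2 * hn2
  · show w.1 * (u + r * w.1 / n) + w.2 * (v + r * w.2 / n) = w.1 * u + w.2 * v + r * n
    field_simp
    linear_combination r * hn2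

lemma isCompact_circleSet (u v r : ℝ) : IsCompact (circleSet u v r) := by
  refine (isCompact_closedBall (u, v) |r|).of_isClosed_subset
    (isClosed_eq (by fun_prop) continuous_const) fun p (hp : _ = _) => ?_
  have h1 : (p.1 - u) ^ 2 ≤ r ^ 2 := by nlinarith [sq_nonneg (p.2 - v), hp.symm.le]
  have h2 : (p.2 - v) ^ 2 ≤ r ^ 2 := by nlinarith [sq_nonneg (p.1 - u), hp.symm.le]
  rw [Metric.mem_closedBall, Prod.dist_eq, Real.dist_eq, Real.dist_eq]
  exact max_le (sq_le_sq.mp h1) (sq_le_sq.mp h2)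

lemma _root_.IsCircle.isCompact {C : Set (ℝ × ℝ)} (hC : IsCircle C) : IsCompact C := by
  obtain ⟨u, v, r, -, rfl⟩ := hC
  exact isCompact_circleSet u v r

/-- Along `w ± t v` with `v ⊥ w` the linear part averages to its value at `w`, while
`|w ± t v| > |w|`; this forces `γ = 0`, and then `a · (w + t a) = a · w` forces `a = 0`. -/
lemma eq_zero_of_forall_dot_add_mul_sqrt_eq_zero {O : Set (ℝ × ℝ)} (hO : IsOpen O)
    (hne : O.Nonempty) {a : ℝ × ℝ} {γ : ℝ} (h : ∀ w ∈ O, dot w a + γ * √(dot w w) = 0) :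
    a = 0 ∧ γ = 0 := by
  obtain ⟨w, hwO, hw0⟩ := (dense_compl_singleton (0 : ℝ × ℝ)).inter_open_nonempty O hO hne
  have hline (z : ℝ × ℝ) : ∀ᶠ t in 𝓝 (0 : ℝ), w + t • z ∈ O :=
    (show Continuous fun t : ℝ => w + t • z by fun_prop).continuousAt.preimage_mem_nhds
      (by simpa using hO.mem_nhds hwO)
  set v : ℝ × ℝ := (-w.2, w.1)
  have hnear : ∀ᶠ t in 𝓝[≠] (0 : ℝ), (w + t • v ∈ O ∧ w + t • -v ∈ O ∧ w + t • a ∈ O) ∧ t ≠ 0 :=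
    (((hline v).and ((hline (-v)).and (hline a))).filter_mono nhdsWithin_le_nhds).and
      self_mem_nhdsWithin
  obtain ⟨t, ⟨hmem_plus, hmem_minus, hmem_a⟩, ht0⟩ := hnear.exists
  have hN : 0 < dot w w := dot_self_pos hw0
  have hS : √(dot w w) < √((1 + t ^ 2) * dot w w) :=
    Real.sqrt_lt_sqrt hN.le (lt_mul_of_one_lt_left hN (by simp; positivity))
  have hw := h w hwO
  have hplus := h _ hmem_plus
  have hminus := h _ hmem_minus
  have hshift := h _ hmem_a
  have hsq_plus : dot (w + t • v) (w + t • v) = (1 + t ^ 2) * dot w w := by simp [dot, v]; ring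
  have hsq_minus : dot (w + t • -v) (w + t • -v) = (1 + t ^ 2) * dot w w := by
    simp [dot, v]; ring
  rw [hsq_plus] at hplus
  rw [hsq_minus] at hminus
  have hγ : γ = 0 := by
    have : γ * (√((1 + t ^ 2) * dot w w) - √(dot w w)) = 0 := by
      simp only [dot, v, Prod.fst_add, Prod.snd_add, Prod.smul_fst, Prod.smul_snd, Prod.fst_neg,
        Prod.snd_neg, smul_eq_mul] at hw hplus hminus ⊢
      linear_combination (hplus + hminus) / 2 - hw
    exact (mul_eq_zero.mp this).resolve_right (sub_pos.mpr hS).ne'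
  refine ⟨dot_self_eq_zero.mp ?_, hγ⟩
  simp only [hγ, zero_mul, add_zero, dot, Prod.fst_add, Prod.snd_add, Prod.smul_fst,
    Prod.smul_snd, smul_eq_mul] at hw hshift ⊢
  have : t * (a.1 * a.1 + a.2 * a.2) = 0 := by linear_combination hshift - hw
  exact (mul_eq_zero.mp this).resolve_left ht0

theorem _root_.IsCircle.eq_of_subset_convexHull_union {K C D : Set (ℝ × ℝ)} (hK : IsCompact K)
    (hC : IsCircle C) (hD : IsCircle D) (hCK : ¬ C ⊆ convexHull ℝ K)
    (hCD : C ⊆ convexHull ℝ (K ∪ D)) (hDC : D ⊆ convexHull ℝ (K ∪ C)) : C = D := by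
  obtain ⟨u, v, r, hr, rfl⟩ := hC
  obtain ⟨u', v', r', hr', rfl⟩ := hD
  have hL := hK.convexHull_of_finiteDimensional
  set O := {w | ∀ q ∈ convexHull ℝ K, dot w q < circleSupport u v r w}
  have hO : IsOpen O := isOpen_setOf_forall_dot_lt hL (continuous_circleSupport u v r)
  have hOne : O.Nonempty := by
    obtain ⟨x, hxC, hxK⟩ := not_subset.mp hCK
    obtain ⟨w, hw⟩ := exists_dot_lt_of_notMem (convex_convexHull ℝ K) hL.isClosed hxK
    exact ⟨w, fun q hq => (hw q hq).trans_le (dot_le_circleSupport hr hxC w)⟩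
  have hsupp (w) (hw : w ∈ O) : circleSupport u v r w = circleSupport u' v' r' w := by
    have hKw : ∀ q ∈ K, dot w q < circleSupport u v r w :=
      fun q hq => hw q (subset_convexHull ℝ K hq)
    have hle := le_of_subset_convexHull_union (isLinearMap_dot w)
      (exists_dot_eq_circleSupport u v r w) (fun q hq => dot_le_circleSupport hr' hq w) hKw hCD
    exact hle.antisymm (le_of_subset_convexHull_union (isLinearMap_dot w)
      (exists_dot_eq_circleSupport u' v' r' w) (fun q hq => dot_le_circleSupport hr hq w)
      (fun q hq => (hKw q hq).trans_le hle) hDC)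
  obtain ⟨hc, hrad⟩ := eq_zero_of_forall_dot_add_mul_sqrt_eq_zero hO hOne
    (a := (u - u', v - v')) (γ := r - r') fun w hw => by
      have := hsupp w hw
      simp only [circleSupport, dot] at this ⊢
      linear_combination this
  simp only [Prod.ext_iff, Prod.fst_zero, Prod.snd_zero, sub_eq_zero] at hc
  rw [hc.1, hc.2, sub_eq_zero.mp hrad]

end PlaneCircle

section RestrictedHull

variable {F : Finset (Set (ℝ × ℝ))} {Y W : Set (Set (ℝ × ℝ))}

def restrictedHull (F : Finset (Set (ℝ × ℝ))) (Y : Set (Set (ℝ × ℝ))) : Set (Set (ℝ × ℝ)) :=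
  {C | C ∈ F ∧ C ⊆ convexHull ℝ (⋃₀ Y)}

lemma closedIn_restrictedHull (F : Finset (Set (ℝ × ℝ))) (Y : Set (Set (ℝ × ℝ))) :
    ClosedIn F (restrictedHull F Y) :=
  ⟨fun _ hC => hC.1, fun _ hCF hC => ⟨hCF, hC.trans <|
    convexHull_min (sUnion_subset fun _ hD => hD.2) (convex_convexHull ℝ _)⟩⟩

lemma subset_restrictedHull (hY : Y ⊆ F) : Y ⊆ restrictedHull F Y :=
  fun _ hC => ⟨hY hC, (subset_sUnion_of_mem hC).trans (subset_convexHull ℝ _)⟩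

lemma restrictedHull_subset (hW : ClosedIn F W) (hYW : Y ⊆ W) : restrictedHull F Y ⊆ W :=
  fun C hC => hW.2 C hC.1 (hC.2.trans (convexHull_mono (sUnion_mono hYW)))

lemma ClosedIn.restrictedHull_eq (hY : ClosedIn F Y) : restrictedHull F Y = Y :=
  (restrictedHull_subset hY le_rfl).antisymm (subset_restrictedHull hY.1)

lemma ClosedIn.inter (hY : ClosedIn F Y) (hW : ClosedIn F W) : ClosedIn F (Y ∩ W) :=
  ⟨inter_subset_left.trans hY.1, fun C hCF hC =>
    ⟨hY.2 C hCF (hC.trans (convexHull_mono (sUnion_mono inter_subset_left))),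
      hW.2 C hCF (hC.trans (convexHull_mono (sUnion_mono inter_subset_right)))⟩⟩

end RestrictedHull

abbrev LatF (F : Finset (Set (ℝ × ℝ))) : Type := {Y : Set (Set (ℝ × ℝ)) // ClosedIn F Y}

instance (F : Finset (Set (ℝ × ℝ))) : Lattice (LatF F) where
  sup X Y := ⟨restrictedHull F (X.1 ∪ Y.1), closedIn_restrictedHull F _⟩
  inf X Y := ⟨X.1 ∩ Y.1, X.2.inter Y.2⟩
  le_sup_left X Y := subset_union_left.trans (subset_restrictedHull (union_subset X.2.1 Y.2.1))
  le_sup_right X Y := subset_union_right.trans (subset_restrictedHull (union_subset X.2.1 Y.2.1))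
  sup_le _ _ Z hX hY := restrictedHull_subset Z.2 (union_subset hX hY)
  inf_le_left _ _ := inter_subset_left
  inf_le_right _ _ := inter_subset_right
  le_inf _ _ _ hY hZ := subset_inter hY hZ

instance (F : Finset (Set (ℝ × ℝ))) : BoundedOrder (LatF F) where
  top := ⟨F, subset_rfl, fun _ hC _ => hC⟩
  le_top X := X.2.1
  bot := ⟨restrictedHull F ∅, closedIn_restrictedHull F ∅⟩
  bot_le X := restrictedHull_subset X.2 (empty_subset _)

instance (F : Finset (Set (ℝ × ℝ))) : Finite (LatF F) :=
  (F.finite_toSet.finite_subsets.subset fun _ hY => hY.1).to_subtype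

noncomputable instance (F : Finset (Set (ℝ × ℝ))) : Fintype (LatF F) :=
  Fintype.ofFinite _

section Extreme

variable {F : Finset (Set (ℝ × ℝ))} {u W : Set (Set (ℝ × ℝ))}

def extremeMembers (u : Set (Set (ℝ × ℝ))) : Set (Set (ℝ × ℝ)) :=
  {C | C ∈ u ∧ ¬ C ⊆ convexHull ℝ (⋃₀ (u \ {C}))}

lemma ClosedIn.of_diff_extremeMembers_subset (hu : ClosedIn F u)
    (hW : u \ extremeMembers u ⊆ W) (hWu : W ⊆ u) : ClosedIn F W := by
  refine ⟨hWu.trans hu.1, fun C hCF hC => ?_⟩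
  have hCu : C ∈ u := hu.2 C hCF (hC.trans (convexHull_mono (sUnion_mono hWu)))
  by_contra hCW
  have hCext : C ∈ extremeMembers u := by_contra fun h => hCW (hW ⟨hCu, h⟩)
  refine hCext.2 (hC.trans (convexHull_mono (sUnion_mono fun D hD => ⟨hWu hD, ?_⟩)))
  rintro rfl
  exact hCW hD

lemma ClosedIn.eq_of_mem_restrictedHull_insert (hF : ∀ C ∈ F, IsCircle C) {v : Set (Set (ℝ × ℝ))}
    (hv : ClosedIn F v) {C D : Set (ℝ × ℝ)} (hCv : C ∉ v)
    (hCD : C ∈ restrictedHull F (insert D v)) (hDC : D ∈ restrictedHull F (insert C v)) :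
    C = D := by
  have hK : IsCompact (⋃₀ v) :=
    (F.finite_toSet.subset hv.1).isCompact_sUnion fun E hE => (hF E (hv.1 hE)).isCompact
  refine (hF C hCD.1).eq_of_subset_convexHull_union hK (hF D hDC.1)
    (fun h => hCv (hv.2 C hCD.1 h)) ?_ ?_
  · rw [union_comm, ← sUnion_insert]
    exact hCD.2
  · rw [union_comm, ← sUnion_insert]
    exact hDC.2

lemma restrictedHull_insert_eq_of_covBy {v w : LatF F} (hvw : v ⋖ w) {C : Set (ℝ × ℝ)}
    (hC : C ∈ w.1 \ v.1) : restrictedHull F (insert C v.1) = w.1 := by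
  have hsub := subset_restrictedHull (F := F) (insert_subset (w.2.1 hC.1) v.2.1)
  rcases hvw.eq_or_eq (c := ⟨_, closedIn_restrictedHull F (insert C v.1)⟩)
    ((subset_insert C v.1).trans hsub) (restrictedHull_subset w.2 (insert_subset hC.1 hvw.le))
    with h | h
  · exact absurd (congrArg Subtype.val h ▸ hsub (mem_insert C v.1)) hC.2
  · exact congrArg Subtype.val h

/-- By anti-exchange `v` misses only one member `C` of `w`, so `w \ {C} ⊆ v`; were `C`
not extreme, it would then lie in the hull of `v`. -/
lemma diff_extremeMembers_subset_of_covBy (hF : ∀ C ∈ F, IsCircle C) {v w : LatF F}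
    (hvw : v ⋖ w) : w.1 \ extremeMembers w.1 ⊆ v.1 := by
  rintro C ⟨hCw, hCext⟩
  by_contra hCv
  have hwC := restrictedHull_insert_eq_of_covBy hvw ⟨hCw, hCv⟩
  have hwv : w.1 \ {C} ⊆ v.1 := by
    rintro D ⟨hDw, hDC⟩
    by_contra hDv
    have hwD := restrictedHull_insert_eq_of_covBy hvw ⟨hDw, hDv⟩
    exact hDC (v.2.eq_of_mem_restrictedHull_insert hF hDv (hwC.superset hDw) (hwD.superset hCw))
  have hChull : C ⊆ convexHull ℝ (⋃₀ (w.1 \ {C})) := not_not.mp fun h => hCext ⟨hCw, h⟩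
  exact hCv (v.2.2 C (w.2.1 hCw) (hChull.trans (convexHull_mono (sUnion_mono hwv))))

lemma diff_extremeMembers_subset_lowstar (hF : ∀ C ∈ F, IsCircle C) (w : LatF F) :
    w.1 \ extremeMembers w.1 ⊆ (lowstar w).1 :=
  show (⟨_, w.2.of_diff_extremeMembers_subset subset_rfl sdiff_subset⟩ : LatF F) ≤ lowstar w from
    Finset.le_inf fun _ hv => diff_extremeMembers_subset_of_covBy hF (Finset.mem_filter.mp hv).2

lemma sup_val_of_lowstar_le (hF : ∀ C ∈ F, IsCircle C) {w x y : LatF F} (hx : lowstar w ≤ x)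
    (hxw : x ≤ w) (hyw : y ≤ w) : (x ⊔ y).1 = x.1 ∪ y.1 :=
  (w.2.of_diff_extremeMembers_subset (W := x.1 ∪ y.1)
    (((diff_extremeMembers_subset_lowstar hF w).trans hx).trans subset_union_left)
    (union_subset hxw hyw)).restrictedHull_eq

end Extreme

theorem latF_is_meetDistributive_lattice (F : Finset (Set (ℝ × ℝ)))
    (hF : ∀ C ∈ F, IsCircle C) :
    ∃ (K : FinBddLattice) (_ : K.carrier ≃o {Y : Set (Set (ℝ × ℝ)) // ClosedIn F Y}),
      MeetDistrib K.carrier := by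
  refine ⟨⟨LatF F⟩, OrderIso.refl _, fun w _ x hx y hy z hz => Subtype.ext ?_⟩
  change x.1 ∩ (y ⊔ z).1 = ((x ⊓ y) ⊔ (x ⊓ z)).1
  rw [sup_val_of_lowstar_le hF hy.1 hy.2 hz.2, sup_val_of_lowstar_le hF (le_inf hx.1 hy.1)
    (inf_le_left.trans hx.2) (inf_le_left.trans hx.2)]
  exact inter_union_distrib_left x.1 y.1 z.1
end

section
/- Let L be a finite, dually slim, lower semimodular lattice (dually slim: the set of meet-irreducible elements contains no three-element antichain). If a₁, a₂ ∈ L \ {0, 1} and (a₁, a₂) is both a complemented pair and a pseudocomplemented pair, then both a₁ and a₂ are meet-irreducible. -/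
open scoped Classical

/-!
An element maximal among those above `d` and not above `c` is meet-irreducible, its only cover
being `m ⊔ c`. If `a₁` had two covers `c₁ ≠ c₂`, this would give meet-irreducible `m₁ ≥ c₂` with
`c₁ ≰ m₁`, `m₂ ≥ c₁` with `c₂ ≰ m₂`, and `n ≥ a₂` with `n ≠ ⊤`. The first two are incomparable,
and neither is comparable with `n`, since any upper bound of `a₁` and `a₂` is `⊤`; this
contradicts dual slimness.
-/

section

variable {L : Type*} [Lattice L]

lemma meetIrred_of_forall_lt_imp_le {c m : L} (hcm : ¬ c ≤ m) (h : ∀ y, m < y → c ≤ y) :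
    MeetIrred m := by
  have hcov : m ⋖ m ⊔ c :=
    ⟨left_lt_sup.mpr hcm, fun z hmz hz => (sup_le hmz.le (h z hmz)).not_gt hz⟩
  refine ⟨m ⊔ c, hcov, fun b hb => ?_⟩
  exact ((sup_le hb.1.le (h b hb.1)).lt_or_eq.resolve_left (hb.2 hcov.1)).symm

lemma exists_meetIrred_ge_not_ge [Finite L] {c d : L} (h : ¬ c ≤ d) :
    ∃ m, MeetIrred m ∧ d ≤ m ∧ ¬ c ≤ m := by
  obtain ⟨m, ⟨hdm, hcm⟩, hmax⟩ :=
    Set.Finite.exists_maximalFor id {x : L | d ≤ x ∧ ¬ c ≤ x} (Set.toFinite _) ⟨d, le_rfl, h⟩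
  refine ⟨m, meetIrred_of_forall_lt_imp_le hcm fun y hy => ?_, hdm, hcm⟩
  by_contra hcy
  exact (hmax ⟨hdm.trans hy.le, hcy⟩ hy.le).not_gt hy

lemma exists_incomparable_covBy_of_not_meetIrred [Finite L] {a : L} (ha : ¬ IsMax a)
    (hirr : ¬ MeetIrred a) : ∃ c₁ c₂, a ⋖ c₁ ∧ a ⋖ c₂ ∧ ¬ c₁ ≤ c₂ ∧ ¬ c₂ ≤ c₁ := by
  obtain ⟨c₁, hc₁⟩ := exists_covBy_of_wellFoundedLT ha
  obtain ⟨c₂, hc₂, hne⟩ : ∃ c₂, a ⋖ c₂ ∧ c₂ ≠ c₁ := by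
    by_contra! h
    exact hirr ⟨c₁, hc₁, h⟩
  exact ⟨c₁, c₂, hc₁, hc₂, fun h => hne (h.lt_or_eq.resolve_left (hc₂.2 hc₁.1)).symm,
    fun h => hne (h.lt_or_eq.resolve_left (hc₁.2 hc₂.1))⟩

lemma DuallySlim.meetIrred_of_sup_eq_top [Finite L] [OrderTop L] (hs : DuallySlim L)
    {a₁ a₂ : L} (h1t : a₁ ≠ ⊤) (h2t : a₂ ≠ ⊤) (hsup : a₁ ⊔ a₂ = ⊤) : MeetIrred a₁ := by
  by_contra hirr
  obtain ⟨c₁, c₂, hc₁, hc₂, h12, h21⟩ :=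
    exists_incomparable_covBy_of_not_meetIrred (not_isMax_iff_ne_top.mpr h1t) hirr
  obtain ⟨m₁, hm₁, hcm₁, hm₁c⟩ := exists_meetIrred_ge_not_ge h12
  obtain ⟨m₂, hm₂, hcm₂, hm₂c⟩ := exists_meetIrred_ge_not_ge h21
  obtain ⟨n, hn, han, hnt⟩ := exists_meetIrred_ge_not_ge (c := (⊤ : L)) (mt top_le_iff.mp h2t)
  have top_le : ∀ {x : L}, a₁ ≤ x → a₂ ≤ x → ⊤ ≤ x := fun h₁ h₂ => hsup ▸ sup_le h₁ h₂
  have incomparable_n : ∀ {x : L}, a₁ ≤ x → ¬ ⊤ ≤ x → ¬ x ≤ n ∧ ¬ n ≤ x := fun hx hxt =>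
    ⟨fun h => hnt (top_le (hx.trans h) han), fun h => hxt (top_le hx (han.trans h))⟩
  obtain ⟨hm₁n, hnm₁⟩ := incomparable_n (hc₂.1.le.trans hcm₁) (fun h => hm₁c (le_top.trans h))
  obtain ⟨hm₂n, hnm₂⟩ := incomparable_n (hc₁.1.le.trans hcm₂) (fun h => hm₂c (le_top.trans h))
  exact hs ⟨m₁, m₂, n, hm₁, hm₂, hn, fun h => hm₂c (hcm₁.trans h), fun h => hm₁c (hcm₂.trans h),
    hm₁n, hnm₁, hm₂n, hnm₂⟩

end

theorem duallySlim_pseudocomplemented_pair_meetIrred_general {L : Type*} [Lattice L] [Fintype L]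
    [BoundedOrder L] (hs : DuallySlim L)
    (a₁ a₂ : L) (h1t : a₁ ≠ ⊤) (h2t : a₂ ≠ ⊤)
    (hsup : a₁ ⊔ a₂ = ⊤) :
    MeetIrred a₁ ∧ MeetIrred a₂ :=
  ⟨hs.meetIrred_of_sup_eq_top h1t h2t hsup,
    hs.meetIrred_of_sup_eq_top h2t h1t (sup_comm a₁ a₂ ▸ hsup)⟩

theorem duallySlim_pseudocomplemented_pair_meetIrred {L : Type*} [Lattice L] [Fintype L]
    [BoundedOrder L] (hs : DuallySlim L) (hLSM : LowerSemimodular L)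
    (a₁ a₂ : L) (h1b : a₁ ≠ ⊥) (h1t : a₁ ≠ ⊤) (h2b : a₂ ≠ ⊥) (h2t : a₂ ≠ ⊤)
    (hinf : a₁ ⊓ a₂ = ⊥) (hsup : a₁ ⊔ a₂ = ⊤) (hp : PseudoPair a₁ a₂) :
    MeetIrred a₁ ∧ MeetIrred a₂ :=
  duallySlim_pseudocomplemented_pair_meetIrred_general hs a₁ a₂ h1t h2t hsup
end

section
/- Let L be a finite lattice with 0 and 1, and let a₁, a₂ ∈ L with a₁ ∧ a₂ = 0, a₁ ∨ a₂ = 1, and each of a₁, a₂ being the pseudocomplement of the other. Suppose X₁ and X₂ are maximal CD-independent subsets of the ideals ↓a₁ and ↓a₂, respectively. Then X = X₁ ∪ X₂ ∪ {1} is a maximal CD-independent subset of L. -/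
open scoped Classical

theorem union_of_maximal_CDIndep_ideals {L : Type*} [Lattice L] [Fintype L]
    [BoundedOrder L] (a₁ a₂ : L)
    (hinf : a₁ ⊓ a₂ = ⊥) (hsup : a₁ ⊔ a₂ = ⊤) (hp : PseudoPair a₁ a₂)
    (X₁ X₂ : Set L)
    (h1 : MaxCDIndepIn (Set.Iic a₁) X₁) (h2 : MaxCDIndepIn (Set.Iic a₂) X₂) :
    MaxCDIndep (X₁ ∪ X₂ ∪ {⊤}) := by
  obtain ⟨hX1S, hX1C, hX1M⟩ := h1
  obtain ⟨hX2S, hX2C, hX2M⟩ := h2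
  -- the top element of each ideal belongs to the maximal set
  have key : ∀ (a : L) (X : Set L), X ⊆ Set.Iic a → CDIndep X →
      (∀ Y ⊆ Set.Iic a, CDIndep Y → X ⊆ Y → Y = X) → a ∈ X := by
    intro a X hS hC hM
    have h := hM (X ∪ {a}) ?_ ?_ Set.subset_union_left
    · rw [← h]; exact Set.mem_union_right _ rfl
    · intro x hx
      rcases hx with hx | hx
      · exact hS hx
      · simp only [Set.mem_singleton_iff] at hx; simp [hx]
    · intro x hx y hy hxy hyx
      rcases hx with hx | hx <;> rcases hy with hy | hy
      · exact hC x hx y hy hxy hyx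
      · simp only [Set.mem_singleton_iff] at hy; subst hy
        exact absurd (hS hx) hxy
      · simp only [Set.mem_singleton_iff] at hx; subst hx
        exact absurd (hS hy) hyx
      · simp only [Set.mem_singleton_iff] at hx hy; subst hx; subst hy
        exact absurd le_rfl hxy
  have ha1 : a₁ ∈ X₁ := key a₁ X₁ hX1S hX1C hX1M
  have ha2 : a₂ ∈ X₂ := key a₂ X₂ hX2S hX2C hX2M
  -- a helper to add an element to a maximal set
  have extend : ∀ (a : L) (X : Set L), X ⊆ Set.Iic a → CDIndep X →
      (∀ Y ⊆ Set.Iic a, CDIndep Y → X ⊆ Y → Y = X) →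
      ∀ (Y : Set L), CDIndep Y → X ⊆ Y → ∀ y ∈ Y, y ≤ a → y ∈ X := by
    intro a X hS hC hM Y hYC hXY y hyY hya
    have hsub : X ∪ {y} ⊆ Set.Iic a := by
      intro x hx
      rcases hx with hx | hx
      · exact hS hx
      · simp only [Set.mem_singleton_iff] at hx; subst hx; exact hya
    have hcd : CDIndep (X ∪ {y}) := by
      intro u hu v hv huv hvu
      rcases hu with hu | hu <;> rcases hv with hv | hv
      · exact hC u hu v hv huv hvu
      · simp only [Set.mem_singleton_iff] at hv; subst hv
        exact hYC u (hXY hu) _ hyY huv hvu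
      · simp only [Set.mem_singleton_iff] at hu; subst hu
        exact hYC _ hyY v (hXY hv) huv hvu
      · simp only [Set.mem_singleton_iff] at hu hv; subst hu; subst hv
        exact absurd le_rfl huv
    have h := hM (X ∪ {y}) hsub hcd Set.subset_union_left
    rw [← h]; exact Set.mem_union_right _ rfl
  refine ⟨Set.subset_univ _, ?_, ?_⟩
  · -- CD-independence of the union
    intro x hx y hy hxy hyx
    rcases hx with (hx | hx) | hx
    · rcases hy with (hy | hy) | hy
      · exact hX1C x hx y hy hxy hyx
      · exact le_bot_iff.mp (le_trans (inf_le_inf (hX1S hx) (hX2S hy)) hinf.le)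
      · simp only [Set.mem_singleton_iff] at hy; subst hy
        exact absurd le_top hxy
    · rcases hy with (hy | hy) | hy
      · have : y ⊓ x = ⊥ :=
          le_bot_iff.mp (le_trans (inf_le_inf (hX1S hy) (hX2S hx)) hinf.le)
        rwa [inf_comm] at this
      · exact hX2C x hx y hy hxy hyx
      · simp only [Set.mem_singleton_iff] at hy; subst hy
        exact absurd le_top hxy
    · simp only [Set.mem_singleton_iff] at hx; subst hx
      exact absurd le_top hyx
  · -- maximality
    intro Y _ hYC hXY
    refine Set.Subset.antisymm ?_ hXY
    intro y hy
    by_cases hy1 : y ⊓ a₁ = ⊥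
    · have hya2 : y ≤ a₂ := hp.1.2 y (by rwa [inf_comm] at hy1)
      exact Or.inl (Or.inr (extend a₂ X₂ hX2S hX2C hX2M Y hYC
        (fun z hz => hXY (Or.inl (Or.inr hz))) y hy hya2))
    · by_cases hy2 : y ⊓ a₂ = ⊥
      · have hya1 : y ≤ a₁ := hp.2.2 y (by rwa [inf_comm] at hy2)
        exact Or.inl (Or.inl (extend a₁ X₁ hX1S hX1C hX1M Y hYC
          (fun z hz => hXY (Or.inl (Or.inl hz))) y hy hya1))
      · have ha1Y : a₁ ∈ Y := hXY (Or.inl (Or.inl ha1))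
        have ha2Y : a₂ ∈ Y := hXY (Or.inl (Or.inr ha2))
        have c1 : y ≤ a₁ ∨ a₁ ≤ y := by
          by_contra h; push_neg at h
          exact hy1 (hYC y hy a₁ ha1Y h.1 h.2)
        have c2 : y ≤ a₂ ∨ a₂ ≤ y := by
          by_contra h; push_neg at h
          exact hy2 (hYC y hy a₂ ha2Y h.1 h.2)
        rcases c1 with c1 | c1 <;> rcases c2 with c2 | c2
        · have : y = ⊥ := le_bot_iff.mp (hinf ▸ le_inf c1 c2)
          exact absurd (by simp [this]) hy1
        · have h21 : a₂ ≤ a₁ := c2.trans c1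
          have : a₂ = ⊥ := le_bot_iff.mp (hinf ▸ le_inf h21 le_rfl)
          exact absurd (by simp [this]) hy2
        · have h12 : a₁ ≤ a₂ := c1.trans c2
          have : a₁ = ⊥ := le_bot_iff.mp (hinf ▸ le_inf le_rfl h12)
          exact absurd (by simp [this]) hy1
        · have : y = ⊤ := le_antisymm le_top (hsup ▸ sup_le c1 c2)
          exact Or.inr (by simp [this])
end

section
/- Let L be a finite distributive lattice, X a maximal CD-independent subset of L with |L| ≥ 2, and let a₁, ..., a_k be the maximal elements of X \ {1}. Then k ≤ 2; moreover, if k = 2, then a₁ ∧ a₂ = 0 and a₁ ∨ a₂ = 1. -/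
open scoped Classical

theorem distrib_maxCDIndep_at_most_two_maximal {L : Type*} [DistribLattice L] [Fintype L]
    [BoundedOrder L] [Nontrivial L] (X : Set L) (hX : MaxCDIndep X) :
    {x | x ∈ X \ {⊤} ∧ ∀ y ∈ X \ {⊤}, x ≤ y → y = x}.ncard ≤ 2 ∧
      ∀ a₁ ∈ {x | x ∈ X \ {⊤} ∧ ∀ y ∈ X \ {⊤}, x ≤ y → y = x},
        ∀ a₂ ∈ {x | x ∈ X \ {⊤} ∧ ∀ y ∈ X \ {⊤}, x ≤ y → y = x},
          a₁ ≠ a₂ → a₁ ⊓ a₂ = ⊥ ∧ a₁ ⊔ a₂ = ⊤ := by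
  obtain ⟨-, hCD, hmax⟩ := hX
  set M := {x | x ∈ X \ {⊤} ∧ ∀ y ∈ X \ {⊤}, x ≤ y → y = x} with hMdef
  have key : ∀ a₁ ∈ M, ∀ a₂ ∈ M, a₁ ≠ a₂ → a₁ ⊓ a₂ = ⊥ ∧ a₁ ⊔ a₂ = ⊤ := by
    intro a₁ h1 a₂ h2 hne
    obtain ⟨⟨h1X, h1t⟩, h1m⟩ := h1
    obtain ⟨⟨h2X, h2t⟩, h2m⟩ := h2
    have hn12 : ¬ a₁ ≤ a₂ := fun h => hne (h1m a₂ ⟨h2X, h2t⟩ h).symm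
    have hn21 : ¬ a₂ ≤ a₁ := fun h => hne (h2m a₁ ⟨h1X, h1t⟩ h)
    have hmeet : a₁ ⊓ a₂ = ⊥ := hCD a₁ h1X a₂ h2X hn12 hn21
    refine ⟨hmeet, ?_⟩
    by_contra hjoin
    set s := a₁ ⊔ a₂ with hsdef
    have haux : ∀ y ∈ X, ¬ y ≤ s → ¬ s ≤ y → y ⊓ s = ⊥ := by
      intro y hy hys hsy
      have hyt : y ≠ ⊤ := fun h => hsy (h ▸ le_top)
      have hy1 : y ⊓ a₁ = ⊥ := by
        have hna : ¬ y ≤ a₁ := fun h => hys (h.trans le_sup_left)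
        have hnb : ¬ a₁ ≤ y := by
          intro h
          have := h1m y ⟨hy, hyt⟩ h
          exact hys (this ▸ le_sup_left)
        exact hCD y hy a₁ h1X hna hnb
      have hy2 : y ⊓ a₂ = ⊥ := by
        have hna : ¬ y ≤ a₂ := fun h => hys (h.trans le_sup_right)
        have hnb : ¬ a₂ ≤ y := by
          intro h
          have := h2m y ⟨hy, hyt⟩ h
          exact hys (this ▸ le_sup_right)
        exact hCD y hy a₂ h2X hna hnb
      calc y ⊓ s = y ⊓ a₁ ⊔ y ⊓ a₂ := inf_sup_left y a₁ a₂
        _ = ⊥ := by rw [hy1, hy2, sup_idem ⊥]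
    have hCD' : CDIndep (insert s X) := by
      intro x hx y hy hxy hyx
      rcases hx with rfl | hx
      · rcases hy with rfl | hy
        · exact absurd le_rfl hxy
        · rw [inf_comm]; exact haux y hy hyx hxy
      · rcases hy with rfl | hy
        · exact haux x hx hxy hyx
        · exact hCD x hx y hy hxy hyx
    have heq : insert s X = X :=
      hmax (insert s X) (Set.subset_univ _) hCD' (Set.subset_insert _ _)
    have hsX : s ∈ X := heq ▸ Set.mem_insert s X
    have : s = a₁ := h1m s ⟨hsX, hjoin⟩ le_sup_left
    exact hn21 (this ▸ (le_sup_right : a₂ ≤ s))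
  refine ⟨?_, key⟩
  by_contra h
  push_neg at h
  obtain ⟨a, ha, b, hb, c, hc, hab, hac, hbc⟩ :=
    (Set.two_lt_ncard (Set.toFinite M)).mp h
  have h1 : a = ⊥ := by
    have := (key b hb c hc hbc).2
    calc a = a ⊓ (b ⊔ c) := by rw [this, inf_top_eq]
      _ = a ⊓ b ⊔ a ⊓ c := inf_sup_left a b c
      _ = ⊥ := by rw [(key a ha b hb hab).1, (key a ha c hc hac).1, sup_idem ⊥]
  have h2 : b = ⊥ := by
    have := (key a ha c hc hac).2
    calc b = b ⊓ (a ⊔ c) := by rw [this, inf_top_eq]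
      _ = b ⊓ a ⊔ b ⊓ c := inf_sup_left b a c
      _ = ⊥ := by rw [inf_comm, (key a ha b hb hab).1, (key b hb c hc hbc).1, sup_idem ⊥]
  exact hab (h1.trans h2.symm)
end

section
/- Let S be a family of nonempty axis-parallel rectangular subsets of the grid {0,...,m} × {0,...,n} that forms a laminar system (any two members are either comparable under inclusion or disjoint) and contains the full grid. If every member of S has at least 4 points, then |S| ≤ ⌊(mn + m + n − 1)/2⌋. -/
open scoped Classical

/-- `X` is a point rectangle of the grid `{0,…,m} × {0,…,n}`: the vertex set of a
nonempty cellular rectangle. -/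
def IsPointRect {m n : ℕ} (X : Set (Fin (m + 1) × Fin (n + 1))) : Prop :=
  ∃ a b : Fin (m + 1), ∃ c d : Fin (n + 1), a < b ∧ c < d ∧
    X = {p | a ≤ p.1 ∧ p.1 ≤ b ∧ c ≤ p.2 ∧ p.2 ≤ d}

lemma rect_ncard {m n : ℕ} (a b : Fin (m+1)) (c d : Fin (n+1)) :
    ({p | a ≤ p.1 ∧ p.1 ≤ b ∧ c ≤ p.2 ∧ p.2 ≤ d} : Set (Fin (m+1) × Fin (n+1))).ncard
      = (b.val + 1 - a.val) * (d.val + 1 - c.val) := by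
  have h : ({p | a ≤ p.1 ∧ p.1 ≤ b ∧ c ≤ p.2 ∧ p.2 ≤ d} : Set (Fin (m+1) × Fin (n+1)))
      = ↑(Finset.Icc a b ×ˢ Finset.Icc c d) := by
    ext p; simp [Finset.mem_product, Finset.mem_Icc, Prod.le_def]; tauto
  rw [h, Set.ncard_coe_finset, Finset.card_product, Fin.card_Icc, Fin.card_Icc]

lemma proper_subrect {m n : ℕ} {X Y : Set (Fin (m+1) × Fin (n+1))}
    (hX : IsPointRect X) (hY : IsPointRect Y) (hss : Y ⊆ X) (hne : Y ≠ X) :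
    Y.ncard + 2 ≤ X.ncard := by
  obtain ⟨a, b, c, d, hab, hcd, rfl⟩ := hX
  obtain ⟨a', b', c', d', hab', hcd', rfl⟩ := hY
  have h1 : (a', c') ∈ ({p | a' ≤ p.1 ∧ p.1 ≤ b' ∧ c' ≤ p.2 ∧ p.2 ≤ d'} :
      Set (Fin (m+1) × Fin (n+1))) := ⟨le_refl _, le_of_lt hab', le_refl _, le_of_lt hcd'⟩
  have h2 : (b', d') ∈ ({p | a' ≤ p.1 ∧ p.1 ≤ b' ∧ c' ≤ p.2 ∧ p.2 ≤ d'} :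
      Set (Fin (m+1) × Fin (n+1))) := ⟨le_of_lt hab', le_refl _, le_of_lt hcd', le_refl _⟩
  have h1' := hss h1
  have h2' := hss h2
  obtain ⟨ha, _, hc, _⟩ := h1'
  obtain ⟨_, hb, _, hd⟩ := h2'
  rw [rect_ncard, rect_ncard]
  -- translate to ℕ
  have ha : a.val ≤ a'.val := ha
  have hb : b'.val ≤ b.val := hb
  have hc : c.val ≤ c'.val := hc
  have hd : d'.val ≤ d.val := hd
  have hab : a.val < b.val := hab
  have hcd : c.val < d.val := hcd
  have hab' : a'.val < b'.val := hab'
  have hcd' : c'.val < d'.val := hcd'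
  by_cases heq : a = a' ∧ b = b' ∧ c = c' ∧ d = d'
  · exact absurd (by rw [heq.1, heq.2.1, heq.2.2.1, heq.2.2.2]) hne
  · have hstrict : a.val < a'.val ∨ b'.val < b.val ∨ c.val < c'.val ∨ d'.val < d.val := by
      by_contra h
      push_neg at h
      exact heq ⟨Fin.le_antisymm ha (h.1), Fin.le_antisymm (h.2.1) hb,
        Fin.le_antisymm hc (h.2.2.1), Fin.le_antisymm (h.2.2.2) hd⟩
    have key : ∀ p q P Q : ℕ, 2 ≤ q → q ≤ Q → p + 1 ≤ P → p * q + 2 ≤ P * Q := by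
      intro p q P Q h2q hqQ hpP
      calc p * q + 2 ≤ p * q + q := by omega
        _ = (p + 1) * q := by ring
        _ ≤ P * Q := Nat.mul_le_mul hpP hqQ
    rcases hstrict with h | h | h | h
    · exact key _ _ _ _ (by omega) (by omega) (by omega)
    · exact key _ _ _ _ (by omega) (by omega) (by omega)
    · rw [Nat.mul_comm ((b'.val:ℕ)+1-a'.val) _, Nat.mul_comm ((b.val:ℕ)+1-a.val) _]
      exact key _ _ _ _ (by omega) (by omega) (by omega)
    · rw [Nat.mul_comm ((b'.val:ℕ)+1-a'.val) _, Nat.mul_comm ((b.val:ℕ)+1-a.val) _]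
      exact key _ _ _ _ (by omega) (by omega) (by omega)

lemma key_lemma {m n : ℕ} : ∀ (k : ℕ) (T : Set (Set (Fin (m+1) × Fin (n+1)))),
    T.ncard ≤ k → T.Nonempty →
    (∀ Y ∈ T, IsPointRect Y) →
    (∀ X ∈ T, ∀ Y ∈ T, X ⊆ Y ∨ Y ⊆ X ∨ X ∩ Y = ∅) →
    (∀ Y ∈ T, 4 ≤ Y.ncard) →
    2 * T.ncard + 2 * {Y | Maximal (· ∈ T) Y}.ncard ≤ (⋃₀ T).ncard := by
  intro k
  induction k with
  | zero =>
    intro T hk hne _ _ _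
    rw [Nat.le_zero, Set.ncard_eq_zero (Set.toFinite T)] at hk
    exact absurd hk (Set.nonempty_iff_ne_empty.mp hne)
  | succ k IH =>
    intro T hk hTne hrect hlam h4
    -- nonemptiness of members
    have hmemne : ∀ Y ∈ T, Y.Nonempty := by
      intro Y hY
      rw [← Set.ncard_pos (Set.toFinite Y)]
      exact lt_of_lt_of_le (by norm_num) (h4 Y hY)
    -- a maximal element
    obtain ⟨W, hWT⟩ := hTne
    obtain ⟨C, _, hCmax⟩ := Set.Finite.exists_le_maximal (Set.toFinite T) hWT
    have hCT : C ∈ T := hCmax.1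
    set T₂ : Set (Set (Fin (m+1) × Fin (n+1))) := {Y ∈ T | ¬ Y ⊆ C} with hT₂def
    -- every member of T₂ is disjoint from C
    have hdisj : ∀ Y ∈ T₂, Y ∩ C = ∅ := by
      intro Y hY
      rcases hlam Y hY.1 C hCT with h | h | h
      · exact absurd h hY.2
      · exact absurd (hCmax.2 hY.1 h) hY.2
      · exact h
    rcases Set.eq_empty_or_nonempty T₂ with hT₂e | hT₂ne
    · -- Case B : everything is contained in C
      have hall : ∀ Y ∈ T, Y ⊆ C := by
        intro Y hY
        by_contra h
        exact Set.eq_empty_iff_forall_notMem.mp hT₂e Y ⟨hY, h⟩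
      have hU : ⋃₀ T = C := by
        apply subset_antisymm (Set.sUnion_subset hall) (Set.subset_sUnion_of_mem hCT)
      have hMax : {Y | Maximal (· ∈ T) Y} = {C} := by
        ext Y
        simp only [Set.mem_setOf_eq, Set.mem_singleton_iff]
        constructor
        · intro hY
          exact subset_antisymm (hall Y hY.1) (hY.2 hCT (hall Y hY.1))
        · rintro rfl
          exact ⟨hCT, fun Y hY _ => hall Y hY⟩
      rw [hU, hMax, Set.ncard_singleton]
      set T' : Set (Set (Fin (m+1) × Fin (n+1))) := T \ {C} with hT'def
      rcases Set.eq_empty_or_nonempty T' with hT'e | hT'ne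
      · -- T = {C}
        have : T = {C} := by
          apply subset_antisymm
          · intro Y hY
            by_contra h
            exact Set.eq_empty_iff_forall_notMem.mp hT'e Y ⟨hY, h⟩
          · simpa using hCT
        rw [this, Set.ncard_singleton]
        have := h4 C hCT
        omega
      · -- T' nonempty; apply IH to T'
        have hT'sub : T' ⊆ T := Set.diff_subset
        have hcard : T'.ncard + 1 = T.ncard := by
          rw [hT'def, Set.ncard_diff_singleton_add_one hCT (Set.toFinite T)]
        have hk' : T'.ncard ≤ k := by omega
        have hIH := IH T' hk' hT'ne (fun Y hY => hrect Y (hT'sub hY))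
          (fun X hX Y hY => hlam X (hT'sub hX) Y (hT'sub hY)) (fun Y hY => h4 Y (hT'sub hY))
        -- a maximal element D of T'
        obtain ⟨W', hW'⟩ := hT'ne
        obtain ⟨D, _, hDmax⟩ := Set.Finite.exists_le_maximal (Set.toFinite T') hW'
        have hDT' : D ∈ T' := hDmax.1
        have hD1 : 1 ≤ {Y | Maximal (· ∈ T') Y}.ncard := by
          rw [Nat.one_le_iff_ne_zero, Ne, Set.ncard_eq_zero (Set.toFinite _)]
          exact Set.nonempty_iff_ne_empty.mp ⟨D, hDmax⟩
        have hU'sub : ⋃₀ T' ⊆ C := by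
          rw [← hU]; exact Set.sUnion_mono hT'sub
        by_cases h2max : 2 ≤ {Y | Maximal (· ∈ T') Y}.ncard
        · have hle : (⋃₀ T').ncard ≤ C.ncard := Set.ncard_le_ncard hU'sub (Set.toFinite C)
          omega
        · -- unique maximal element D
          have hMT' : {Y | Maximal (· ∈ T') Y} = {D} := by
            apply subset_antisymm
            · intro Y hY
              by_contra hYD
              have : ({Y, D} : Set _).ncard ≤ {Z | Maximal (· ∈ T') Z}.ncard :=
                Set.ncard_le_ncard (by rintro Z (rfl | rfl) <;> [exact hY; exact hDmax])
                  (Set.toFinite _)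
              rw [Set.ncard_pair hYD] at this
              omega
            · rintro Y rfl; exact hDmax
          have hallD : ∀ Y ∈ T', Y ⊆ D := by
            intro Y hY
            obtain ⟨E, hYE, hEmax⟩ := Set.Finite.exists_le_maximal (Set.toFinite T') hY
            have : E = D := by
              have := Set.mem_singleton_iff.mp (hMT' ▸ (Set.mem_setOf.mpr hEmax))
              exact this
            exact this ▸ hYE
          have hU'D : ⋃₀ T' ⊆ D := Set.sUnion_subset hallD
          have hDC : D ⊆ C := hall D hDT'.1
          have hDneC : D ≠ C := hDT'.2
          have hrectD : D.ncard + 2 ≤ C.ncard :=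
            proper_subrect (hrect C hCT) (hrect D hDT'.1) hDC hDneC
          have hle : (⋃₀ T').ncard ≤ D.ncard := Set.ncard_le_ncard hU'D (Set.toFinite D)
          omega
    · -- Case A : split into T₁ (inside C) and T₂ (disjoint from C)
      set T₁ : Set (Set (Fin (m+1) × Fin (n+1))) := {Y ∈ T | Y ⊆ C} with hT₁def
      have hT₁sub : T₁ ⊆ T := fun Y hY => hY.1
      have hT₂sub : T₂ ⊆ T := fun Y hY => hY.1
      have hCT₁ : C ∈ T₁ := ⟨hCT, subset_rfl⟩
      have hsplit : T = T₁ ∪ T₂ := by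
        ext Y
        simp only [hT₁def, hT₂def, Set.mem_union, Set.mem_setOf_eq]
        tauto
      have hdisjT : Disjoint T₁ T₂ := by
        rw [Set.disjoint_left]
        rintro Y ⟨_, h1⟩ ⟨_, h2⟩
        exact h2 h1
      have hcardsplit : T.ncard = T₁.ncard + T₂.ncard := by
        rw [hsplit, Set.ncard_union_eq hdisjT (Set.toFinite _) (Set.toFinite _)]
      have hT₂pos : 1 ≤ T₂.ncard := by
        rw [Nat.one_le_iff_ne_zero, Ne, Set.ncard_eq_zero (Set.toFinite _)]
        exact Set.nonempty_iff_ne_empty.mp hT₂ne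
      have hT₁pos : 1 ≤ T₁.ncard := by
        rw [Nat.one_le_iff_ne_zero, Ne, Set.ncard_eq_zero (Set.toFinite _)]
        exact Set.nonempty_iff_ne_empty.mp ⟨C, hCT₁⟩
      have hIH₁ := IH T₁ (by omega) ⟨C, hCT₁⟩ (fun Y hY => hrect Y (hT₁sub hY))
        (fun X hX Y hY => hlam X (hT₁sub hX) Y (hT₁sub hY)) (fun Y hY => h4 Y (hT₁sub hY))
      have hIH₂ := IH T₂ (by omega) hT₂ne (fun Y hY => hrect Y (hT₂sub hY))
        (fun X hX Y hY => hlam X (hT₂sub hX) Y (hT₂sub hY)) (fun Y hY => h4 Y (hT₂sub hY))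
      -- C is maximal in T₁
      have hCmax₁ : Maximal (· ∈ T₁) C := ⟨hCT₁, fun Y hY _ => hY.2⟩
      have hM₁pos : 1 ≤ {Y | Maximal (· ∈ T₁) Y}.ncard := by
        rw [Nat.one_le_iff_ne_zero, Ne, Set.ncard_eq_zero (Set.toFinite _)]
        exact Set.nonempty_iff_ne_empty.mp ⟨C, hCmax₁⟩
      -- maximal elements of T are C or maximal elements of T₂
      have hMsub : {Y | Maximal (· ∈ T) Y} ⊆ insert C {Y | Maximal (· ∈ T₂) Y} := by
        intro Y hY
        by_cases hYC : Y = C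
        · exact Or.inl hYC
        · right
          have hYT₂ : Y ∈ T₂ := by
            refine ⟨hY.1, fun hYsub => ?_⟩
            exact hYC (subset_antisymm hYsub (hY.2 hCT hYsub))
          exact ⟨hYT₂, fun Z hZ hYZ => hY.2 hZ.1 hYZ⟩
      have hMcard : {Y | Maximal (· ∈ T) Y}.ncard ≤ {Y | Maximal (· ∈ T₂) Y}.ncard + 1 := by
        calc {Y | Maximal (· ∈ T) Y}.ncard
            ≤ (insert C {Y | Maximal (· ∈ T₂) Y}).ncard :=
              Set.ncard_le_ncard hMsub (Set.toFinite _)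
          _ ≤ {Y | Maximal (· ∈ T₂) Y}.ncard + 1 := Set.ncard_insert_le _ _
      -- union splits
      have hUsplit : (⋃₀ T).ncard = (⋃₀ T₁).ncard + (⋃₀ T₂).ncard := by
        rw [hsplit, Set.sUnion_union]
        apply Set.ncard_union_eq _ (Set.toFinite _) (Set.toFinite _)
        rw [Set.disjoint_sUnion_left]
        intro Y hY
        rw [Set.disjoint_sUnion_right]
        intro Z hZ
        have hZC := hdisj Z hZ
        rw [Set.disjoint_iff_inter_eq_empty]
        have hYC : Y ⊆ C := hY.2
        rw [Set.eq_empty_iff_forall_notMem] at hZC ⊢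
        intro x ⟨hxY, hxZ⟩
        exact hZC x ⟨hxZ, hYC hxY⟩
      omega

theorem laminar_rectangles_card_bound (m n : ℕ) (hm : 1 ≤ m) (hn : 1 ≤ n)
    (S : Set (Set (Fin (m + 1) × Fin (n + 1))))
    (hrect : ∀ X ∈ S, IsPointRect X)
    (hlam : ∀ X ∈ S, ∀ Y ∈ S, X ⊆ Y ∨ Y ⊆ X ∨ X ∩ Y = ∅)
    (hfull : Set.univ ∈ S)
    (h4 : ∀ X ∈ S, 4 ≤ X.ncard) :
    S.ncard ≤ (m * n + m + n - 1) / 2 := by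
  have hkey := key_lemma S.ncard S le_rfl ⟨Set.univ, hfull⟩ hrect hlam h4
  have hU : ⋃₀ S = Set.univ := Set.eq_univ_of_univ_subset (Set.subset_sUnion_of_mem hfull)
  have hUcard : (⋃₀ S).ncard = (m + 1) * (n + 1) := by
    rw [hU, Set.ncard_univ, Nat.card_eq_fintype_card, Fintype.card_prod, Fintype.card_fin,
      Fintype.card_fin]
  have hMpos : 1 ≤ {Y | Maximal (· ∈ S) Y}.ncard := by
    rw [Nat.one_le_iff_ne_zero, Ne, Set.ncard_eq_zero (Set.toFinite _)]
    exact Set.nonempty_iff_ne_empty.mp ⟨Set.univ, hfull, fun Y _ _ => Set.subset_univ Y⟩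
  have hprod : (m + 1) * (n + 1) = m * n + m + n + 1 := by ring
  omega
end

section
/- Let L be a finite lattice, a₁, a₂ ∈ L with a₁ incomparable to a₂, a₁ ∧ a₂ = 0 and a₁ ∨ a₂ = 1, and each the pseudocomplement of the other. Let X ⊆ L contain {0,1} ∪ Atoms(L) with max(X \ {1}) = {a₁, a₂}, and suppose X ∩ ↓a_i is a maximal CD-independent subset of ↓a_i for i = 1, 2. Then X is a maximal CD-independent subset of L. -/
open scoped Classical

/-
Every element of `X` other than `⊤` lies below a maximal one, `a₁` or `a₂`; as `a₁ ⊓ a₂ = ⊥`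
this makes `X` CD-independent. If `Y ⊇ X` is CD-independent and `z ∈ Y \ {⊤}`, then `z` is not
above both `a₁` and `a₂` (their join is `⊤`), and if `z` is incomparable with one of them it meets
it to `⊥`, so it lies below its pseudocomplement, the other one. Hence `z` lies in some `↓aᵢ`,
where maximality of `X ∩ ↓aᵢ` forces `z ∈ X`.
-/

theorem le_or_le_of_maximal_eq_pair {α : Type*} [PartialOrder α] {S : Set α} (hS : S.Finite)
    {a b : α} (hmax : {x | x ∈ S ∧ ∀ y ∈ S, x ≤ y → y = x} = {a, b}) {x : α} (hx : x ∈ S) :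
    x ≤ a ∨ x ≤ b := by
  obtain ⟨m, hxm, hm⟩ := hS.exists_le_maximal hx
  have hm' : m ∈ ({a, b} : Set α) := hmax ▸ ⟨hm.prop, fun y hy hmy => (hm.eq_of_le hy hmy).symm⟩
  rcases hm' with rfl | rfl
  exacts [Or.inl hxm, Or.inr hxm]

namespace CDIndep

variable {L : Type*} [Lattice L]

theorem mono [OrderBot L] {X Y : Set L} (hY : CDIndep Y) (hXY : X ⊆ Y) : CDIndep X :=
  fun x hx y hy => hY x (hXY hx) y (hXY hy)

theorem of_le_or_le [BoundedOrder L] {X : Set L} {a b : L} (hab : a ⊓ b = ⊥)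
    (hle : ∀ x ∈ X, x ≠ ⊤ → x ≤ a ∨ x ≤ b)
    (ha : CDIndep (X ∩ Set.Iic a)) (hb : CDIndep (X ∩ Set.Iic b)) : CDIndep X := by
  intro x hx y hy hxy hyx
  have hxt : x ≠ ⊤ := by rintro rfl; exact hyx le_top
  have hyt : y ≠ ⊤ := by rintro rfl; exact hxy le_top
  rcases hle x hx hxt with hxa | hxb <;> rcases hle y hy hyt with hya | hyb
  · exact ha x ⟨hx, hxa⟩ y ⟨hy, hya⟩ hxy hyx
  · exact eq_bot_mono (inf_le_inf hxa hyb) hab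
  · exact eq_bot_mono (inf_le_inf hxb hya) ((inf_comm b a).trans hab)
  · exact hb x ⟨hx, hxb⟩ y ⟨hy, hyb⟩ hxy hyx

theorem le_or_le_of_pseudoPair [BoundedOrder L] {Y : Set L} (hY : CDIndep Y) {a b : L}
    (hp : PseudoPair a b) (hsup : a ⊔ b = ⊤) (ha : a ∈ Y) (hb : b ∈ Y) {z : L} (hz : z ∈ Y)
    (hzt : z ≠ ⊤) : z ≤ a ∨ z ≤ b := by
  by_cases hza : z ≤ a
  · exact Or.inl hza
  by_cases haz : a ≤ z
  · by_cases hzb : z ≤ b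
    · exact Or.inr hzb
    by_cases hbz : b ≤ z
    · exact absurd (top_le_iff.mp (hsup ▸ sup_le haz hbz)) hzt
    · exact Or.inl (hp.2.2 z (inf_comm z b ▸ hY z hz b hb hzb hbz))
  · exact Or.inr (hp.1.2 z (inf_comm z a ▸ hY z hz a ha hza haz))

end CDIndep

theorem MaxCDIndepIn.mem_of_mem {L : Type*} [Lattice L] [OrderBot L] {S X Y : Set L}
    (hX : MaxCDIndepIn S X) (hY : CDIndep Y) (hXY : X ⊆ Y) {z : L} (hzY : z ∈ Y) (hzS : z ∈ S) :
    z ∈ X := by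
  have hsubS : X ∪ {z} ⊆ S := Set.union_subset hX.1 (Set.singleton_subset_iff.mpr hzS)
  have hsubY : X ∪ {z} ⊆ Y := Set.union_subset hXY (Set.singleton_subset_iff.mpr hzY)
  rw [← hX.2.2 _ hsubS (hY.mono hsubY) Set.subset_union_left]
  exact Set.mem_union_right _ rfl

theorem recursive_maximal_CDIndep_general {L : Type*} [Lattice L] [Fintype L]
    [BoundedOrder L] (a₁ a₂ : L)
    (hsup : a₁ ⊔ a₂ = ⊤) (hp : PseudoPair a₁ a₂)
    (X : Set L) (hsub : ({⊥, ⊤} ∪ {a : L | IsAtom a}) ⊆ X)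
    (hmax : {x | x ∈ X \ {⊤} ∧ ∀ y ∈ X \ {⊤}, x ≤ y → y = x} = {a₁, a₂})
    (h1 : MaxCDIndepIn (Set.Iic a₁) (X ∩ Set.Iic a₁))
    (h2 : MaxCDIndepIn (Set.Iic a₂) (X ∩ Set.Iic a₂)) :
    MaxCDIndep X := by
  have hle : ∀ x ∈ X, x ≠ ⊤ → x ≤ a₁ ∨ x ≤ a₂ := fun x hx hxt =>
    le_or_le_of_maximal_eq_pair (Set.toFinite _) hmax ⟨hx, hxt⟩
  refine ⟨Set.subset_univ X, CDIndep.of_le_or_le hp.1.1 hle h1.2.1 h2.2.1, ?_⟩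
  intro Y _ hY hXY
  have haY : ∀ a ∈ ({a₁, a₂} : Set L), a ∈ Y := fun a ha => hXY (hmax.symm.subset ha).1.1
  refine Set.Subset.antisymm (fun z hz => ?_) hXY
  by_cases hzt : z = ⊤
  · exact hzt ▸ hsub (Or.inl (Or.inr rfl))
  rcases hY.le_or_le_of_pseudoPair hp hsup (haY a₁ (.inl rfl)) (haY a₂ (.inr rfl)) hz hzt
    with hz1 | hz2
  · exact (h1.mem_of_mem hY (Set.inter_subset_left.trans hXY) hz hz1).1
  · exact (h2.mem_of_mem hY (Set.inter_subset_left.trans hXY) hz hz2).1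

theorem recursive_maximal_CDIndep {L : Type*} [Lattice L] [Fintype L]
    [BoundedOrder L] (a₁ a₂ : L)
    (h12 : ¬ a₁ ≤ a₂) (h21 : ¬ a₂ ≤ a₁)
    (hinf : a₁ ⊓ a₂ = ⊥) (hsup : a₁ ⊔ a₂ = ⊤) (hp : PseudoPair a₁ a₂)
    (X : Set L) (hsub : ({⊥, ⊤} ∪ {a : L | IsAtom a}) ⊆ X)
    (hmax : {x | x ∈ X \ {⊤} ∧ ∀ y ∈ X \ {⊤}, x ≤ y → y = x} = {a₁, a₂})
    (h1 : MaxCDIndepIn (Set.Iic a₁) (X ∩ Set.Iic a₁))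
    (h2 : MaxCDIndepIn (Set.Iic a₂) (X ∩ Set.Iic a₂)) :
    MaxCDIndep X :=
  recursive_maximal_CDIndep_general a₁ a₂ hsup hp X hsub hmax h1 h2
end
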